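/- arXiv:1106.2755 — 6 statements merged into one kernel-verified Lean document; each statement's English description precedes it below -/
import Mathlib

section
/- Let E be a vector lattice, f a positive linear functional on E, and 𝒫 a set of band projections on the order dual E~ such that for every x ∈ E, f(x⁺) = sup { (p f)(x) : p ∈ 𝒫 }. Then every g with 0 ≤ g ≤ f satisfying inf_{p ∈ 𝒫} ( (p^⊥ g)(x) + (p (f − g))(x) ) = 0 for all x ≥ 0 is a fragment of f, i.e., g ∧ (f − g) = 0. -/
/-- Disjointness of two positive linear functionals on a vector lattice. -/
def DisjointFunc {E : Type*} [Lattice E] [AddCommGroup E] [Module ℝ E]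
    (u v : E →ₗ[ℝ] ℝ) : Prop :=
  ∀ h : E →ₗ[ℝ] ℝ, (∀ x, 0 ≤ x → 0 ≤ h x) → (∀ x, 0 ≤ x → h x ≤ u x) →
    (∀ x, 0 ≤ x → h x ≤ v x) → h = 0

/-- A band projection on the functionals: a linear idempotent `p` with `0 ≤ p ≤ Id`. -/
def IsBandProj {E : Type*} [Lattice E] [AddCommGroup E] [Module ℝ E]
    (p : (E →ₗ[ℝ] ℝ) →ₗ[ℝ] (E →ₗ[ℝ] ℝ)) : Prop :=
  p ∘ₗ p = p ∧
  ∀ u : E →ₗ[ℝ] ℝ, (∀ x, 0 ≤ x → 0 ≤ u x) →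
    ∀ x, 0 ≤ x → 0 ≤ (p u) x ∧ (p u) x ≤ u x

/-
Any positive `h` below both `g` and `f - g` satisfies, for every band projection `p`,
`h = p^⊥ h + p h ≤ p^⊥ g + p (f - g)` on the positive cone; taking the infimum over `p`
gives `h = 0` on the positive cone, hence `h = 0` since `x = x⁺ - x⁻`.
-/

theorem map_eq_zero_of_map_nonneg_eq_zero {E G F : Type*} [Lattice E] [AddCommGroup E]
    [AddLeftMono E] [AddGroup G] [FunLike F E G] [AddMonoidHomClass F E G] (h : F)
    (hh : ∀ x, 0 ≤ x → h x = 0) (x : E) : h x = 0 := by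
  rw [← posPart_sub_negPart x, map_sub, hh _ (posPart_nonneg x), hh _ (negPart_nonneg x),
    sub_zero]

namespace IsBandProj

variable {E : Type*} [Lattice E] [AddCommGroup E] [Module ℝ E]
  {p : (E →ₗ[ℝ] ℝ) →ₗ[ℝ] (E →ₗ[ℝ] ℝ)}

theorem apply_le_compl_add_apply (hp : IsBandProj p) {f g h : E →ₗ[ℝ] ℝ}
    (hhg : ∀ x, 0 ≤ x → h x ≤ g x) (hhfg : ∀ x, 0 ≤ x → h x ≤ (f - g) x)
    {x : E} (hx : 0 ≤ x) : h x ≤ (g - p g) x + (p (f - g)) x := by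
  have hgh : ∀ y, 0 ≤ y → 0 ≤ (g - h) y := fun y hy => sub_nonneg.2 (hhg y hy)
  have hfgh : ∀ y, 0 ≤ y → 0 ≤ (f - g - h) y := fun y hy => sub_nonneg.2 (hhfg y hy)
  have hcompl := (hp.2 _ hgh x hx).2
  have hpos := (hp.2 _ hfgh x hx).1
  simp only [map_sub, LinearMap.sub_apply] at hcompl hpos ⊢
  linarith

end IsBandProj

theorem stmt4_general {E : Type*} [Lattice E] [AddCommGroup E] [Module ℝ E]
    [CovariantClass E E (· + ·) (· ≤ ·)]
    (f g : E →ₗ[ℝ] ℝ)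
    (Ps : Set ((E →ₗ[ℝ] ℝ) →ₗ[ℝ] (E →ₗ[ℝ] ℝ)))
    (hPs : ∀ p ∈ Ps, IsBandProj p)
    (hinf : ∀ x, 0 ≤ x →
      IsGLB {r : ℝ | ∃ p ∈ Ps, r = (g - p g) x + (p (f - g)) x} 0) :
    DisjointFunc g (f - g) := by
  intro h hpos hhg hhfg
  have hzero : ∀ x, 0 ≤ x → h x = 0 := fun x hx =>
    le_antisymm
      ((hinf x hx).2 <| by
        rintro r ⟨p, hp, rfl⟩
        exact (hPs p hp).apply_le_compl_add_apply hhg hhfg hx)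
      (hpos x hx)
  ext x
  exact map_eq_zero_of_map_nonneg_eq_zero h hzero x

/-- If `Ps` generates the fragments of `f` and
`inf_{p ∈ Ps} (p^⊥ g (x) + p (f - g) (x)) = 0` for all `x ≥ 0`, then `g` is a
fragment of `f`. -/
theorem stmt4 {E : Type*} [Lattice E] [AddCommGroup E] [Module ℝ E]
    [CovariantClass E E (· + ·) (· ≤ ·)]
    (f g : E →ₗ[ℝ] ℝ) (hf : ∀ x, 0 ≤ x → 0 ≤ f x)
    (hg : ∀ x, 0 ≤ x → 0 ≤ g x) (hgf : ∀ x, 0 ≤ x → g x ≤ f x)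
    (Ps : Set ((E →ₗ[ℝ] ℝ) →ₗ[ℝ] (E →ₗ[ℝ] ℝ)))
    (hPs : ∀ p ∈ Ps, IsBandProj p)
    (hgen : ∀ x : E, IsLUB {r : ℝ | ∃ p ∈ Ps, r = (p f) x} (f (x ⊔ 0)))
    (hinf : ∀ x, 0 ≤ x →
      IsGLB {r : ℝ | ∃ p ∈ Ps, r = (g - p g) x + (p (f - g)) x} 0) :
    DisjointFunc g (f - g) :=
  stmt4_general f g Ps hPs hinf
end

section
/- Let E be a vector lattice, f a positive linear functional on E, and 𝒫 a set of band projections on E~ generating the fragments of f. If g with 0 ≤ g ≤ f is a fragment of f, then inf { |p f − g|(x) : p ∈ 𝒫 } = 0 for every x ≥ 0 in E. -/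
/-!
On the positive cone, `x ↦ inf {g (x - y) + (f - g) y : 0 ≤ y ≤ x}` is additive by the Riesz
decomposition property, so it extends to a positive linear functional below `g` and `f - g`, which
vanishes because `g` is a fragment. Hence for `x ≥ 0` there is `0 ≤ y ≤ x` such that `g` is almost
zero on `w = x - y` and `f - g` is almost zero on `y`. Choosing `p ∈ Ps` with `(p f) (y - w)`
close to `f (y - w)⁺`, itself close to `f y`, makes `p f` almost agree with `f` on `y` and almost
vanish on `w`; then `p f - g` is small on `{y' : |y'| ≤ x}`.

Real homogeneity of the extension cannot be read off the order, as `t • ·` need not be monotone on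
`E`; it follows from a bound `|h (t • z)| ≤ C |t|` (continuity of `t ↦ h (t • z)`), which rests on
the homogeneity of `f ∘ posPart` forced by the generating property of `Ps`.
-/

open Set Pointwise

section LatticeOrderedGroup

variable {E : Type*} [Lattice E] [AddCommGroup E] [CovariantClass E E (· + ·) (· ≤ ·)]

lemma exists_add_eq_of_le_add {a b y : E} (ha : 0 ≤ a) (hb : 0 ≤ b) (hy : 0 ≤ y)
    (hyab : y ≤ a + b) : ∃ y₁ ∈ Icc 0 a, ∃ y₂ ∈ Icc 0 b, y₁ + y₂ = y := by
  refine ⟨y ⊓ a, ⟨le_inf hy ha, inf_le_right⟩, y - y ⊓ a,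
    ⟨sub_nonneg.mpr inf_le_left, ?_⟩, add_sub_cancel _ _⟩
  rw [sub_inf y a y]
  exact sup_le (by simpa using hb) (sub_le_iff_le_add'.mpr hyab)

def AddMonoidHom.ofNonnegAdd {G : Type*} [AddCommGroup G] (φ : E → G)
    (hφ : ∀ a b, 0 ≤ a → 0 ≤ b → φ (a + b) = φ a + φ b) : E →+ G where
  toFun x := φ x⁺ - φ x⁻
  map_zero' := by simp
  map_add' x y := by
    have hsub : ∀ a b : E, 0 ≤ a → 0 ≤ b → φ (a - b)⁺ - φ (a - b)⁻ = φ a - φ b := by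
      intro a b ha hb
      have hsplit : (a - b)⁺ + b = a + (a - b)⁻ := by
        rw [← sub_eq_sub_iff_add_eq_add, posPart_sub_negPart]
      have := congrArg φ hsplit
      rw [hφ _ _ (posPart_nonneg _) hb, hφ _ _ ha (negPart_nonneg _)] at this
      rw [sub_eq_sub_iff_add_eq_add, this]
    have hxy : x + y = (x⁺ + y⁺) - (x⁻ + y⁻) := by
      rw [add_sub_add_comm, posPart_sub_negPart, posPart_sub_negPart]
    rw [hxy, hsub _ _ (add_nonneg (posPart_nonneg _) (posPart_nonneg _))
      (add_nonneg (negPart_nonneg _) (negPart_nonneg _)),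
      hφ _ _ (posPart_nonneg _) (posPart_nonneg _), hφ _ _ (negPart_nonneg _) (negPart_nonneg _)]
    abel

lemma AddMonoidHom.ofNonnegAdd_of_nonneg {G : Type*} [AddCommGroup G] (φ : E → G)
    (hφ : ∀ a b, 0 ≤ a → 0 ≤ b → φ (a + b) = φ a + φ b) {x : E} (hx : 0 ≤ x) :
    AddMonoidHom.ofNonnegAdd φ hφ x = φ x := by
  have hφ0 : φ 0 = 0 := by simpa using hφ 0 0 le_rfl le_rfl
  simp [AddMonoidHom.ofNonnegAdd, posPart_of_nonneg hx, negPart_of_nonneg hx, hφ0]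

lemma abs_le_posPart_add_negPart {F : E →+ ℝ} {w : E → ℝ} (hF : ∀ x, 0 ≤ x → 0 ≤ F x)
    (hFw : ∀ x, 0 ≤ x → F x ≤ w x) (x : E) : |F x| ≤ w x⁺ + w x⁻ := by
  have hx : F x = F x⁺ - F x⁻ := by rw [← map_sub, posPart_sub_negPart]
  have := hF _ (posPart_nonneg x)
  have := hF _ (negPart_nonneg x)
  have := hFw _ (posPart_nonneg x)
  have := hFw _ (negPart_nonneg x)
  rw [hx, abs_le]
  constructor <;> linarith

end LatticeOrderedGroup

lemma map_smul_of_abs_le {E : Type*} [AddCommGroup E] [Module ℝ E] (φ : E →+ ℝ)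
    (hφ : ∀ z, ∃ C, ∀ t : ℝ, |φ (t • z)| ≤ C * |t|) (c : ℝ) (z : E) :
    φ (c • z) = c • φ z := by
  obtain ⟨C, hC⟩ := hφ z
  let ψ : ℝ →+ ℝ := φ.comp ((smulAddHom ℝ E).flip z)
  have hψ : Continuous ψ := AddMonoidHomClass.continuous_of_bound ψ C hC
  simpa [ψ] using map_real_smul ψ hψ c 1

lemma map_posPart_smul_of_isLUB {E : Type*} [Lattice E] [AddCommGroup E] [Module ℝ E]
    {f : E →ₗ[ℝ] ℝ} {Ps : Set ((E →ₗ[ℝ] ℝ) →ₗ[ℝ] (E →ₗ[ℝ] ℝ))}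
    (hgen : ∀ x : E, IsLUB {r : ℝ | ∃ p ∈ Ps, r = (p f) x} (f x⁺)) (z : E) {t : ℝ}
    (ht : 0 < t) : f (t • z)⁺ = t * f z⁺ := by
  have hset : {r : ℝ | ∃ p ∈ Ps, r = (p f) (t • z)} =
      OrderIso.mulLeft₀ t ht '' {r : ℝ | ∃ p ∈ Ps, r = (p f) z} := by
    ext r
    simp [eq_comm]
  exact (hgen (t • z)).unique <| by
    rw [hset]
    exact (OrderIso.mulLeft₀ t ht).isLUB_image'.mpr (hgen z)

section PositiveFunctional

variable {E : Type*} [Lattice E] [AddCommGroup E] [Module ℝ E]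
  [CovariantClass E E (· + ·) (· ≤ ·)]

lemma monotone_of_map_nonneg {u : E →ₗ[ℝ] ℝ} (hu : ∀ x, 0 ≤ x → 0 ≤ u x) : Monotone u :=
  fun a b hab => by simpa using hu (b - a) (sub_nonneg.mpr hab)

lemma abs_map_smul_le {F : E →+ ℝ} {w : E → ℝ} (hF : ∀ x, 0 ≤ x → 0 ≤ F x)
    (hFw : ∀ x, 0 ≤ x → F x ≤ w x)
    (hw : ∀ z (t : ℝ), 0 < t → w (t • z)⁺ = t * w z⁺) (z : E) (t : ℝ) :
    |F (t • z)| ≤ (w z⁺ + w z⁻) * |t| := by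
  have hpos : ∀ t : ℝ, 0 < t → |F (t • z)| ≤ (w z⁺ + w z⁻) * t := fun t ht => by
    have := abs_le_posPart_add_negPart hF hFw (t • z)
    rwa [← posPart_neg, ← smul_neg, hw _ _ ht, hw _ _ ht, posPart_neg,
      ← mul_add, mul_comm] at this
  rcases lt_trichotomy t 0 with ht | rfl | ht
  · simpa [abs_of_neg ht, neg_smul] using hpos (-t) (neg_pos.mpr ht)
  · simp
  · simpa [abs_of_pos ht] using hpos t ht

variable {u v : E →ₗ[ℝ] ℝ}

variable (u v) in
/-- The Riesz–Kantorovich formula for `(u ⊓ v) x`, `x ≥ 0`. -/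
noncomputable def rieszInf (x : E) : ℝ :=
  sInf ((fun y => u (x - y) + v y) '' Icc 0 x)

lemma zero_mem_lowerBounds_rieszInf (hu : ∀ x, 0 ≤ x → 0 ≤ u x)
    (hv : ∀ x, 0 ≤ x → 0 ≤ v x) (x : E) :
    0 ∈ lowerBounds ((fun y => u (x - y) + v y) '' Icc 0 x) := by
  rintro _ ⟨y, ⟨hy0, hyx⟩, rfl⟩
  exact add_nonneg (hu _ (sub_nonneg.mpr hyx)) (hv _ hy0)

lemma rieszInf_le {x y : E} (hu : ∀ x, 0 ≤ x → 0 ≤ u x) (hv : ∀ x, 0 ≤ x → 0 ≤ v x)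
    (hy : y ∈ Icc 0 x) : rieszInf u v x ≤ u (x - y) + v y :=
  csInf_le ⟨0, zero_mem_lowerBounds_rieszInf hu hv x⟩ (mem_image_of_mem _ hy)

lemma rieszInf_nonneg (hu : ∀ x, 0 ≤ x → 0 ≤ u x) (hv : ∀ x, 0 ≤ x → 0 ≤ v x) {x : E}
    (hx : 0 ≤ x) : 0 ≤ rieszInf u v x :=
  le_csInf ((nonempty_Icc.mpr hx).image _) (zero_mem_lowerBounds_rieszInf hu hv x)

lemma rieszInf_le_left (hu : ∀ x, 0 ≤ x → 0 ≤ u x) (hv : ∀ x, 0 ≤ x → 0 ≤ v x) {x : E}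
    (hx : 0 ≤ x) : rieszInf u v x ≤ u x := by
  simpa using rieszInf_le hu hv (left_mem_Icc.mpr hx)

lemma rieszInf_le_right (hu : ∀ x, 0 ≤ x → 0 ≤ u x) (hv : ∀ x, 0 ≤ x → 0 ≤ v x) {x : E}
    (hx : 0 ≤ x) : rieszInf u v x ≤ v x := by
  simpa using rieszInf_le hu hv (right_mem_Icc.mpr hx)

lemma rieszInf_add (hu : ∀ x, 0 ≤ x → 0 ≤ u x) (hv : ∀ x, 0 ≤ x → 0 ≤ v x) {a b : E}
    (ha : 0 ≤ a) (hb : 0 ≤ b) : rieszInf u v (a + b) = rieszInf u v a + rieszInf u v b := by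
  have hset : (fun y => u (a + b - y) + v y) '' Icc 0 (a + b) =
      (fun y => u (a - y) + v y) '' Icc 0 a + (fun y => u (b - y) + v y) '' Icc 0 b := by
    ext r
    simp only [mem_image, mem_add]
    constructor
    · rintro ⟨y, ⟨hy0, hyab⟩, rfl⟩
      obtain ⟨y₁, hy₁, y₂, hy₂, rfl⟩ := exists_add_eq_of_le_add ha hb hy0 hyab
      refine ⟨_, ⟨y₁, hy₁, rfl⟩, _, ⟨y₂, hy₂, rfl⟩, ?_⟩
      rw [add_sub_add_comm, map_add, map_add]
      ring
    · rintro ⟨_, ⟨y₁, ⟨hy₁0, hy₁a⟩, rfl⟩, _, ⟨y₂, ⟨hy₂0, hy₂b⟩, rfl⟩, rfl⟩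
      refine ⟨y₁ + y₂, ⟨add_nonneg hy₁0 hy₂0, add_le_add hy₁a hy₂b⟩, ?_⟩
      rw [add_sub_add_comm, map_add, map_add]
      ring
  rw [rieszInf, hset, csInf_add ((nonempty_Icc.mpr ha).image _)
    ⟨0, zero_mem_lowerBounds_rieszInf hu hv a⟩ ((nonempty_Icc.mpr hb).image _)
    ⟨0, zero_mem_lowerBounds_rieszInf hu hv b⟩]
  rfl

lemma exists_linearMap_eq_rieszInf (hu : ∀ x, 0 ≤ x → 0 ≤ u x) (hv : ∀ x, 0 ≤ x → 0 ≤ v x)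
    (hhom : ∀ z (t : ℝ), 0 < t → (u + v) (t • z)⁺ = t * (u + v) z⁺) :
    ∃ h : E →ₗ[ℝ] ℝ, ∀ x, 0 ≤ x → h x = rieszInf u v x := by
  let F := AddMonoidHom.ofNonnegAdd (rieszInf u v) fun _ _ => rieszInf_add hu hv
  have hF : ∀ x, 0 ≤ x → F x = rieszInf u v x := fun _ =>
    AddMonoidHom.ofNonnegAdd_of_nonneg _ _
  have hFw : ∀ x, 0 ≤ x → F x ≤ (u + v) x := fun x hx => by
    rw [hF x hx, LinearMap.add_apply]
    linarith [rieszInf_le_left hu hv hx, hv x hx]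
  have hbound := abs_map_smul_le (fun x hx => (hF x hx).symm ▸ rieszInf_nonneg hu hv hx)
    hFw hhom
  exact ⟨{ F with map_smul' := map_smul_of_abs_le F fun z => ⟨_, hbound z⟩ }, hF⟩

lemma rieszInf_eq_zero (hu : ∀ x, 0 ≤ x → 0 ≤ u x) (hv : ∀ x, 0 ≤ x → 0 ≤ v x)
    (hhom : ∀ z (t : ℝ), 0 < t → (u + v) (t • z)⁺ = t * (u + v) z⁺)
    (huv : DisjointFunc u v) {x : E} (hx : 0 ≤ x) : rieszInf u v x = 0 := by
  obtain ⟨h, hh⟩ := exists_linearMap_eq_rieszInf hu hv hhom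
  have h0 : h = 0 := huv h (fun x hx => (hh x hx).symm ▸ rieszInf_nonneg hu hv hx)
    (fun x hx => (hh x hx).symm ▸ rieszInf_le_left hu hv hx)
    (fun x hx => (hh x hx).symm ▸ rieszInf_le_right hu hv hx)
  rw [← hh x hx, h0, LinearMap.zero_apply]

lemma exists_mem_Icc_add_lt (hu : ∀ x, 0 ≤ x → 0 ≤ u x) (hv : ∀ x, 0 ≤ x → 0 ≤ v x)
    (hhom : ∀ z (t : ℝ), 0 < t → (u + v) (t • z)⁺ = t * (u + v) z⁺)
    (huv : DisjointFunc u v) {x : E} (hx : 0 ≤ x) {δ : ℝ} (hδ : 0 < δ) :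
    ∃ y ∈ Icc 0 x, u (x - y) + v y < δ := by
  have : rieszInf u v x < δ := (rieszInf_eq_zero hu hv hhom huv hx).symm ▸ hδ
  obtain ⟨_, ⟨y, hy, rfl⟩, hlt⟩ := exists_lt_of_csInf_lt ((nonempty_Icc.mpr hx).image _) this
  exact ⟨y, hy, hlt⟩

variable {f g : E →ₗ[ℝ] ℝ}

lemma map_sub_map_posPart_sub_le (hg : ∀ x, 0 ≤ x → 0 ≤ g x)
    (hgf : ∀ x, 0 ≤ x → g x ≤ f x) (y w : E) :
    f y - f (y - w)⁺ ≤ g w + (f - g) y := by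
  have hfg : ∀ x, 0 ≤ x → 0 ≤ (f - g) x := fun x hx => sub_nonneg.mpr (hgf x hx)
  have hinf : y - (y - w)⁺ = w ⊓ y := by
    rw [posPart_def, sub_sup, sub_sub_cancel, sub_zero]
  have h1 := monotone_of_map_nonneg hg (inf_le_left : w ⊓ y ≤ w)
  have h2 := monotone_of_map_nonneg hfg (inf_le_right : w ⊓ y ≤ y)
  rw [← map_sub, hinf]
  simp only [LinearMap.sub_apply] at h2 ⊢
  linarith

/-- Write `p f - g = p (f - g) - (g - p g)` and bound both positive terms at `y + w`. -/
lemma sub_apply_le_of_abs_le {p : (E →ₗ[ℝ] ℝ) →ₗ[ℝ] (E →ₗ[ℝ] ℝ)}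
    (hp : ∀ u : E →ₗ[ℝ] ℝ, (∀ x, 0 ≤ x → 0 ≤ u x) →
      ∀ x, 0 ≤ x → 0 ≤ (p u) x ∧ (p u) x ≤ u x)
    (hg : ∀ x, 0 ≤ x → 0 ≤ g x) (hgf : ∀ x, 0 ≤ x → g x ≤ f x) {y w y' : E}
    (hy : 0 ≤ y) (hw : 0 ≤ w) (hy' : |y'| ≤ y + w) :
    (p f - g) y' ≤ g w + (f - g) y + (f y - p f (y - w)) := by
  have hfg : ∀ x, 0 ≤ x → 0 ≤ (f - g) x := fun x hx => sub_nonneg.mpr (hgf x hx)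
  have h1 := monotone_of_map_nonneg (fun x hx => (hp _ hfg x hx).1)
    ((le_abs_self y').trans hy')
  have h2 := monotone_of_map_nonneg (u := g - p g)
    (fun x hx => sub_nonneg.mpr (hp _ hg x hx).2) ((neg_le_abs y').trans hy')
  have h3 := (hp _ hfg y hy).2
  have h4 := (hp _ hg w hw).1
  simp only [LinearMap.sub_apply, map_sub, map_add, map_neg] at h1 h2 h3 h4 ⊢
  linarith

lemma exists_forall_abs_le_sub_apply_le {Ps : Set ((E →ₗ[ℝ] ℝ) →ₗ[ℝ] (E →ₗ[ℝ] ℝ))}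
    (hg : ∀ x, 0 ≤ x → 0 ≤ g x) (hgf : ∀ x, 0 ≤ x → g x ≤ f x)
    (hPs : ∀ p ∈ Ps, IsBandProj p)
    (hgen : ∀ x : E, IsLUB {r : ℝ | ∃ p ∈ Ps, r = (p f) x} (f x⁺))
    (hfrag : DisjointFunc g (f - g)) {x : E} (hx : 0 ≤ x) {ε : ℝ} (hε : 0 < ε) :
    ∃ p ∈ Ps, ∀ y', |y'| ≤ x → (p f - g) y' ≤ ε := by
  have hfg : ∀ x, 0 ≤ x → 0 ≤ (f - g) x := fun x hx => sub_nonneg.mpr (hgf x hx)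
  obtain ⟨y, ⟨hy0, hyx⟩, hy⟩ := exists_mem_Icc_add_lt hg hfg
    (by simpa only [add_sub_cancel] using map_posPart_smul_of_isLUB hgen) hfrag hx
    (by positivity : 0 < ε / 3)
  obtain ⟨_, ⟨p, hp, rfl⟩, hpf, -⟩ :=
    (hgen (y - (x - y))).exists_between (sub_lt_self _ (by positivity : 0 < ε / 3))
  refine ⟨p, hp, fun y' hy' => ?_⟩
  have := map_sub_map_posPart_sub_le hg hgf y (x - y)
  have := sub_apply_le_of_abs_le (hPs p hp).2 hg hgf hy0 (sub_nonneg.mpr hyx)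
    (hy'.trans_eq (add_sub_cancel y x).symm)
  linarith

end PositiveFunctional

theorem stmt5_general {E : Type*} [Lattice E] [AddCommGroup E] [Module ℝ E]
    [CovariantClass E E (· + ·) (· ≤ ·)]
    (f g : E →ₗ[ℝ] ℝ)
    (hg : ∀ x, 0 ≤ x → 0 ≤ g x) (hgf : ∀ x, 0 ≤ x → g x ≤ f x)
    (Ps : Set ((E →ₗ[ℝ] ℝ) →ₗ[ℝ] (E →ₗ[ℝ] ℝ)))
    (hPs : ∀ p ∈ Ps, IsBandProj p)
    (hgen : ∀ x : E, IsLUB {r : ℝ | ∃ p ∈ Ps, r = (p f) x} (f (x ⊔ 0)))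
    (hfrag : DisjointFunc g (f - g)) :
    ∀ x, 0 ≤ x →
      IsGLB {r : ℝ | ∃ p ∈ Ps,
        IsLUB {s : ℝ | ∃ y, |y| ≤ x ∧ s = (p f - g) y} r} 0 := by
  intro x hx
  have hzero : ∀ p : (E →ₗ[ℝ] ℝ) →ₗ[ℝ] (E →ₗ[ℝ] ℝ),
      (0 : ℝ) ∈ {s : ℝ | ∃ y, |y| ≤ x ∧ s = (p f - g) y} :=
    fun p => ⟨0, by simpa using hx, by simp⟩
  refine ⟨fun r ⟨p, _, hr⟩ => hr.1 (hzero p), fun b hb => ?_⟩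
  refine le_of_forall_pos_le_add fun ε hε => ?_
  obtain ⟨p, hp, hle⟩ := exists_forall_abs_le_sub_apply_le hg hgf hPs hgen hfrag hx hε
  have hε_ub : ε ∈ upperBounds {s : ℝ | ∃ y, |y| ≤ x ∧ s = (p f - g) y} := by
    rintro _ ⟨y, hy, rfl⟩
    exact hle y hy
  have hlub := isLUB_csSup ⟨0, hzero p⟩ ⟨ε, hε_ub⟩
  rw [zero_add]
  exact (hb ⟨p, hp, hlub⟩).trans (hlub.2 hε_ub)

/-- If `Ps` generates the fragments of `f` and `g` is a fragment of `f`, then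
`inf { |p f - g|(x) : p ∈ Ps } = 0` for every `x ≥ 0`, where
`|u|(x) = sup { u y : |y| ≤ x }` is the Riesz–Kantorovich modulus. -/
theorem stmt5 {E : Type*} [Lattice E] [AddCommGroup E] [Module ℝ E]
    [CovariantClass E E (· + ·) (· ≤ ·)]
    (f g : E →ₗ[ℝ] ℝ) (hf : ∀ x, 0 ≤ x → 0 ≤ f x)
    (hg : ∀ x, 0 ≤ x → 0 ≤ g x) (hgf : ∀ x, 0 ≤ x → g x ≤ f x)
    (Ps : Set ((E →ₗ[ℝ] ℝ) →ₗ[ℝ] (E →ₗ[ℝ] ℝ)))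
    (hPs : ∀ p ∈ Ps, IsBandProj p)
    (hgen : ∀ x : E, IsLUB {r : ℝ | ∃ p ∈ Ps, r = (p f) x} (f (x ⊔ 0)))
    (hfrag : DisjointFunc g (f - g)) :
    ∀ x, 0 ≤ x →
      IsGLB {r : ℝ | ∃ p ∈ Ps,
        IsLUB {s : ℝ | ∃ y, |y| ≤ x ∧ s = (p f - g) y} r} 0 :=
  stmt5_general f g hg hgf Ps hPs hgen hfrag
end

section
/- Let E be a vector lattice and f, g positive linear functionals on E. If g lies in the band generated by f in E~ then for every x ≥ 0 and every ε > 0 there is δ > 0 such that for all y with 0 ≤ y ≤ x, f(y) ≤ δ implies g(y) ≤ ε. -/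
open Filter Topology

section AbsCont

variable {E : Type*} [Preorder E] [AddCommGroup E] [Module ℝ E]

def AbsCont (f s : E →ₗ[ℝ] ℝ) : Prop :=
  ∀ x, 0 ≤ x → ∀ ε : ℝ, 0 < ε → ∃ δ : ℝ, 0 < δ ∧ ∀ y, 0 ≤ y → y ≤ x → f y ≤ δ → s y ≤ ε

theorem absCont_zero (f : E →ₗ[ℝ] ℝ) : AbsCont f 0 :=
  fun _ _ _ hε => ⟨1, one_pos, fun _ _ _ _ => hε.le⟩

theorem AbsCont.add {f s k : E →ₗ[ℝ] ℝ} (hs : AbsCont f s) (hk : AbsCont f k) :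
    AbsCont f (s + k) := by
  intro x hx ε hε
  obtain ⟨δ₁, hδ₁, hs⟩ := hs x hx (ε / 2) (half_pos hε)
  obtain ⟨δ₂, hδ₂, hk⟩ := hk x hx (ε / 2) (half_pos hε)
  refine ⟨min δ₁ δ₂, lt_min hδ₁ hδ₂, fun y hy hyx hfy => ?_⟩
  have := hs y hy hyx (hfy.trans (min_le_left _ _))
  have := hk y hy hyx (hfy.trans (min_le_right _ _))
  rw [LinearMap.add_apply]
  linarith

end AbsCont

namespace LinearMap

variable {E : Type*} [Lattice E] [AddCommGroup E] [Module ℝ E]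
  [CovariantClass E E (· + ·) (· ≤ ·)]

theorem ext_of_nonneg {s t : E →ₗ[ℝ] ℝ} (h : ∀ z, 0 ≤ z → s z = t z) : s = t :=
  ext fun z => by
    rw [← posPart_sub_negPart z, map_sub, map_sub, h _ (posPart_nonneg z),
      h _ (negPart_nonneg z)]

/-- The order of the order dual `E~`. -/
abbrev coneOrder : PartialOrder (E →ₗ[ℝ] ℝ) where
  le s t := ∀ z, 0 ≤ z → s z ≤ t z
  le_refl _ _ _ := le_rfl
  le_trans _ _ _ hst htu z hz := (hst z hz).trans (htu z hz)
  le_antisymm _ _ hst hts := ext_of_nonneg fun z hz => le_antisymm (hst z hz) (hts z hz)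

attribute [local instance] coneOrder

theorem coneOrder_isOrderedAddMonoid : IsOrderedAddMonoid (E →ₗ[ℝ] ℝ) where
  add_le_add_left _ _ hst u z hz := by
    rw [add_apply, add_apply]
    exact add_le_add_left (hst z hz) (u z)

attribute [local instance] coneOrder_isOrderedAddMonoid

theorem exists_isLUB_tendsto_of_monotone {ι : Type*} [Preorder ι] [IsDirectedOrder ι]
    [Nonempty ι] {a : ι → E →ₗ[ℝ] ℝ} (ha : Monotone a) {g : E →ₗ[ℝ] ℝ} (hg : ∀ i, a i ≤ g) :
    ∃ u : E →ₗ[ℝ] ℝ, IsLUB (Set.range a) u ∧ ∀ z, Tendsto (fun i => a i z) atTop (𝓝 (u z)) := by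
  have hpos : ∀ z, 0 ≤ z → Tendsto (fun i => a i z) atTop (𝓝 (⨆ i, a i z)) := fun z hz =>
    tendsto_atTop_ciSup (fun i j hij => ha hij z hz)
      ⟨g z, by rintro _ ⟨i, rfl⟩; exact hg i z hz⟩
  have hlim : Tendsto (fun i z => a i z) atTop (𝓝 fun z => (⨆ i, a i z⁺) - ⨆ i, a i z⁻) :=
    tendsto_pi_nhds.2 fun z => by
      simpa only [← map_sub, posPart_sub_negPart] using
        (hpos _ (posPart_nonneg z)).sub (hpos _ (negPart_nonneg z))
  set u := linearMapOfTendsto _ a hlim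
  have hu : ∀ z, Tendsto (fun i => a i z) atTop (𝓝 (u z)) := tendsto_pi_nhds.1 hlim
  refine ⟨u, ⟨?_, fun b hb z hz => ?_⟩, hu⟩
  · rintro _ ⟨i, rfl⟩ z hz
    exact Monotone.ge_of_tendsto (f := fun j => a j z) (fun _ _ hij => ha hij z hz) (hu z) i
  · exact le_of_tendsto' (hu z) fun i => hb ⟨i, rfl⟩ z hz

end LinearMap

attribute [local instance] LinearMap.coneOrder LinearMap.coneOrder_isOrderedAddMonoid

section MaximalAbsCont

variable {E : Type*} [Lattice E] [AddCommGroup E] [Module ℝ E]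
  [CovariantClass E E (· + ·) (· ≤ ·)]

theorem absCont_of_le {f k : E →ₗ[ℝ] ℝ} (hkf : k ≤ f) : AbsCont f k :=
  fun _ _ ε hε => ⟨ε, hε, fun y hy _ hfy => (hkf y hy).trans hfy⟩

theorem AbsCont.of_tendsto {ι : Type*} {l : Filter ι} [l.NeBot] {f u : E →ₗ[ℝ] ℝ}
    {a : ι → E →ₗ[ℝ] ℝ} (ha : ∀ i, AbsCont f (a i)) (hau : ∀ i, a i ≤ u)
    (hlim : ∀ z, Tendsto (fun i => a i z) l (𝓝 (u z))) : AbsCont f u := by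
  intro x hx ε hε
  obtain ⟨i, hi⟩ :=
    ((hlim x).eventually (Ioi_mem_nhds (sub_lt_self (u x) (half_pos hε)))).exists
  obtain ⟨δ, hδ, hai⟩ := ha i x hx (ε / 2) (half_pos hε)
  refine ⟨δ, hδ, fun y hy hyx hfy => ?_⟩
  -- `u - a i` is positive, so its value at `y` is at most its value at `x`, which is `< ε / 2`
  have hgap := hau i (x - y) (sub_nonneg.2 hyx)
  have := hai y hy hyx hfy
  simp only [map_sub] at hgap hi
  linarith

theorem exists_maximal_absCont (f g : E →ₗ[ℝ] ℝ) (hg : 0 ≤ g) :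
    ∃ m, Maximal (fun s => 0 ≤ s ∧ s ≤ g ∧ AbsCont f s) m := by
  refine (zorn_le_nonempty₀ {s | 0 ≤ s ∧ s ≤ g ∧ AbsCont f s} (fun c hcS hc y hy => ?_) 0
    ⟨le_rfl, hg, absCont_zero f⟩).imp fun _ => And.right
  have := hc.directedOn.isDirectedOrder
  have : Nonempty c := ⟨⟨y, hy⟩⟩
  obtain ⟨u, hlub, hlim⟩ := LinearMap.exists_isLUB_tendsto_of_monotone
    (a := ((↑) : c → E →ₗ[ℝ] ℝ)) (fun _ _ h => h) (fun i => (hcS i.2).2.1)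
  have hle : ∀ i : c, (i : E →ₗ[ℝ] ℝ) ≤ u := fun i => hlub.1 ⟨i, rfl⟩
  refine ⟨u, ⟨(hcS hy).1.trans (hle ⟨y, hy⟩), ?_, ?_⟩, fun z hz => hle ⟨z, hz⟩⟩
  · exact hlub.2 (by rintro _ ⟨i, rfl⟩; exact (hcS i.2).2.1)
  · exact AbsCont.of_tendsto (fun i => (hcS i.2).2.2) hle hlim

end MaximalAbsCont

theorem stmt6_general {E : Type*} [Lattice E] [AddCommGroup E] [Module ℝ E]
    [CovariantClass E E (· + ·) (· ≤ ·)]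
    (f g : E →ₗ[ℝ] ℝ)
    (hg : ∀ x, 0 ≤ x → 0 ≤ g x)
    (hband : ∀ h : E →ₗ[ℝ] ℝ, (∀ x, 0 ≤ x → 0 ≤ h x) →
      DisjointFunc h f → DisjointFunc h g) :
    ∀ x, 0 ≤ x → ∀ ε : ℝ, 0 < ε → ∃ δ : ℝ, 0 < δ ∧
      ∀ y, 0 ≤ y → y ≤ x → f y ≤ δ → g y ≤ ε := by
  obtain ⟨m, ⟨hm0, hmg, hmf⟩, hmax⟩ := exists_maximal_absCont f g hg
  have hdisj : DisjointFunc (g - m) f := fun k hk0 hkgm hkf => by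
    have hmk : m + k ≤ m :=
      hmax ⟨add_nonneg hm0 hk0, le_sub_iff_add_le'.1 hkgm, hmf.add (absCont_of_le hkf)⟩
        (le_add_of_nonneg_right hk0)
    exact le_antisymm ((add_le_iff_nonpos_right m).1 hmk) hk0
  have hgm : g - m = 0 :=
    hband (g - m) (sub_nonneg.2 hmg) hdisj (g - m) (sub_nonneg.2 hmg)
      (fun _ _ => le_rfl) (sub_le_self g hm0)
  rw [sub_eq_zero.1 hgm]
  exact hmf

/-- If `g` lies in the band `{f}^⊥⊥` (every positive functional disjoint from `f`
is disjoint from `g`), then for every `x ≥ 0` and `ε > 0` there is `δ > 0` such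
that `0 ≤ y ≤ x` and `f y ≤ δ` imply `g y ≤ ε`. -/
theorem stmt6 {E : Type*} [Lattice E] [AddCommGroup E] [Module ℝ E]
    [CovariantClass E E (· + ·) (· ≤ ·)]
    (f g : E →ₗ[ℝ] ℝ) (hf : ∀ x, 0 ≤ x → 0 ≤ f x)
    (hg : ∀ x, 0 ≤ x → 0 ≤ g x)
    (hband : ∀ h : E →ₗ[ℝ] ℝ, (∀ x, 0 ≤ x → 0 ≤ h x) →
      DisjointFunc h f → DisjointFunc h g) :
    ∀ x, 0 ≤ x → ∀ ε : ℝ, 0 < ε → ∃ δ : ℝ, 0 < δ ∧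
      ∀ y, 0 ≤ y → y ≤ x → f y ≤ δ → g y ≤ ε :=
  stmt6_general f g hg hband
end

section
/- Let E be a vector lattice, f a positive linear functional on E, and 𝒫 a set of band projections on E~ generating the fragments of f, and suppose g is a fragment of f. Then g lies in the weak-* closure of the set 𝒫(f) := { p f : p ∈ 𝒫 } within the order interval [0, f]; in particular, for every finite set x₁, …, x_n ∈ E and ε > 0 there is p ∈ 𝒫 with |p f(x_i) − g(x_i)| ≤ ε for all i. -/
/-!
The fragment `g` and its complement `f - g` are disjoint, so by the Riesz–Kantorovich formula
`(g ⊓ (f - g)) u = 0` every `u ≥ 0` splits as `u = w + v` with `g w` and `(f - g) v` small.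
Scalar multiplication is not assumed compatible with the order, so the formula is obtained from
Hahn–Banach instead: on the cone `{x | f x⁻ = 0}`, invariant under positive scalars because
`x ↦ f x⁺` is a supremum of the linear maps `p f`, the Riesz–Kantorovich infimum `coneMeet` of `g`
and `f - g` is sublinear, and a linear minorant of it that touches it at `u` lies below `g` and
`f - g`, hence vanishes. Now pick `p ∈ Ps` with `p f (v - w)` close to `f (v - w)⁺`: then `p f` is
close to `f`, hence to `g`, on `[0, v]`, and close to `0`, as is `g`, on `[0, w]`. Taking
`u ≥ |xᵢ|` for all `i` gives the estimate.
-/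

open scoped Pointwise

theorem pos_homogeneous_of_isLUB {E ι : Type*} [AddCommGroup E] [Module ℝ E]
    (φ : ι → E →ₗ[ℝ] ℝ) {S : Set ι} {F : E → ℝ}
    (hF : ∀ x, IsLUB {r | ∃ i ∈ S, r = φ i x} (F x)) {c : ℝ} (hc : 0 < c) (x : E) :
    F (c • x) = c * F x := by
  have h_image : {r | ∃ i ∈ S, r = φ i (c • x)} =
      OrderIso.mulLeft₀ c hc '' {r | ∃ i ∈ S, r = φ i x} := by
    ext r
    simp [eq_comm]
  refine (hF (c • x)).unique ?_
  rw [h_image]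
  exact (OrderIso.mulLeft₀ c hc).isLUB_image'.2 (hF x)

section ConeMeet

variable {E : Type*} [AddCommGroup E] [Module ℝ E]

theorem exists_linear_le_sublinear_eq (N : E → ℝ)
    (N_hom : ∀ c : ℝ, 0 < c → ∀ x, N (c • x) = c * N x) (N_add : ∀ x y, N (x + y) ≤ N x + N y)
    (u : E) : ∃ H : E →ₗ[ℝ] ℝ, (∀ x, H x ≤ N x) ∧ H u = N u := by
  have N_zero : N 0 = 0 := by
    have := N_hom 2 two_pos 0
    rw [smul_zero] at this
    linarith
  let H₀ : E →ₗ.[ℝ] ℝ := LinearPMap.mkSpanSingleton' u (N u) fun c hc => by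
    rcases smul_eq_zero.1 hc with rfl | rfl
    · exact zero_smul ℝ _
    · rw [N_zero, smul_zero]
  have hH₀ : ∀ x : H₀.domain, H₀ x ≤ N x := by
    rintro ⟨_, hx⟩
    obtain ⟨t, rfl⟩ := Submodule.mem_span_singleton.1 hx
    rw [LinearPMap.mkSpanSingleton'_apply]
    change t * N u ≤ N (t • u)
    rcases lt_trichotomy t 0 with ht | rfl | ht
    · have h_neg := N_add u (-u)
      rw [add_neg_cancel, N_zero] at h_neg
      rw [← neg_smul_neg, N_hom (-t) (neg_pos.2 ht)]
      nlinarith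
    · simp [N_zero]
    · exact (N_hom t ht u).ge
  obtain ⟨H, hHu, hHN⟩ := exists_extension_of_le_sublinear H₀ N N_hom N_add hH₀
  refine ⟨H, hHN, ?_⟩
  have hu : u ∈ H₀.domain := Submodule.mem_span_singleton_self u
  exact (hHu ⟨u, hu⟩).trans (LinearPMap.mkSpanSingleton'_apply_self _ _ _ _)

variable (C : ConvexCone ℝ E) (g h : E →ₗ[ℝ] ℝ)

def meetCandidates (x : E) : Set ℝ :=
  {r | ∃ a ∈ C, ∃ b ∈ C, a + b - x ∈ C ∧ g a + h b = r}

/-- The Riesz–Kantorovich formula for `(g ⊓ h) x`, in the order whose positive cone is `C`. -/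
noncomputable def coneMeet (x : E) : ℝ := sInf (meetCandidates C g h x)

variable {C g h}

theorem meetCandidates_nonempty (hC0 : C.Pointed) (hCgen : ∀ x, ∃ a ∈ C, a - x ∈ C) (x : E) :
    (meetCandidates C g h x).Nonempty := by
  obtain ⟨a, ha, hax⟩ := hCgen x
  exact ⟨_, a, ha, 0, hC0, by rwa [add_zero], rfl⟩

theorem bddBelow_meetCandidates (hg : ∀ x ∈ C, 0 ≤ g x) (hh : ∀ x ∈ C, 0 ≤ h x) (x : E) :
    BddBelow (meetCandidates C g h x) :=
  ⟨0, by rintro _ ⟨a, ha, b, hb, -, rfl⟩; exact add_nonneg (hg a ha) (hh b hb)⟩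

theorem meetCandidates_add_subset (x y : E) :
    meetCandidates C g h x + meetCandidates C g h y ⊆ meetCandidates C g h (x + y) := by
  rintro _ ⟨_, ⟨a, ha, b, hb, hx, rfl⟩, _, ⟨a', ha', b', hb', hy, rfl⟩, rfl⟩
  refine ⟨a + a', C.add_mem ha ha', b + b', C.add_mem hb hb', ?_, by simp only [map_add]; ring⟩
  convert C.add_mem hx hy using 1
  abel

theorem smul_meetCandidates_subset {c : ℝ} (hc : 0 < c) (x : E) :
    c • meetCandidates C g h x ⊆ meetCandidates C g h (c • x) := by
  rintro _ ⟨_, ⟨a, ha, b, hb, hx, rfl⟩, rfl⟩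
  refine ⟨c • a, C.smul_mem hc ha, c • b, C.smul_mem hc hb, ?_, by simp [mul_add]⟩
  convert C.smul_mem hc hx using 1
  simp only [smul_sub, smul_add]

theorem smul_meetCandidates {c : ℝ} (hc : 0 < c) (x : E) :
    c • meetCandidates C g h x = meetCandidates C g h (c • x) := by
  refine (smul_meetCandidates_subset hc x).antisymm ?_
  have h_inv := smul_meetCandidates_subset (C := C) (g := g) (h := h) (inv_pos.2 hc) (c • x)
  rwa [inv_smul_smul₀ hc.ne', Set.smul_set_subset_iff₀ (inv_ne_zero hc.ne'), inv_inv] at h_inv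

theorem coneMeet_add_le (hC0 : C.Pointed) (hCgen : ∀ x, ∃ a ∈ C, a - x ∈ C)
    (hg : ∀ x ∈ C, 0 ≤ g x) (hh : ∀ x ∈ C, 0 ≤ h x) (x y : E) :
    coneMeet C g h (x + y) ≤ coneMeet C g h x + coneMeet C g h y := by
  have hne := meetCandidates_nonempty (g := g) (h := h) hC0 hCgen
  have hbdd := bddBelow_meetCandidates hg hh
  rw [coneMeet, coneMeet, coneMeet, ← csInf_add (hne x) (hbdd x) (hne y) (hbdd y)]
  exact csInf_le_csInf (hbdd _) ((hne x).add (hne y)) (meetCandidates_add_subset x y)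

theorem coneMeet_smul {c : ℝ} (hc : 0 < c) (x : E) :
    coneMeet C g h (c • x) = c * coneMeet C g h x := by
  rw [coneMeet, ← smul_meetCandidates hc, Real.sInf_smul_of_nonneg hc.le, smul_eq_mul, coneMeet]

theorem coneMeet_le (hg : ∀ x ∈ C, 0 ≤ g x) (hh : ∀ x ∈ C, 0 ≤ h x) {a b x : E}
    (ha : a ∈ C) (hb : b ∈ C) (hx : a + b - x ∈ C) : coneMeet C g h x ≤ g a + h b :=
  csInf_le (bddBelow_meetCandidates hg hh x) ⟨a, ha, b, hb, hx, rfl⟩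

theorem exists_linear_le_coneMeet (hC0 : C.Pointed) (hCgen : ∀ x, ∃ a ∈ C, a - x ∈ C)
    (hg : ∀ x ∈ C, 0 ≤ g x) (hh : ∀ x ∈ C, 0 ≤ h x) (u : E) :
    ∃ H : E →ₗ[ℝ] ℝ, (∀ x ∈ C, 0 ≤ H x ∧ H x ≤ g x ∧ H x ≤ h x) ∧ H u = coneMeet C g h u := by
  obtain ⟨H, hHle, hHu⟩ := exists_linear_le_sublinear_eq (coneMeet C g h)
    (fun _ hc x => coneMeet_smul hc x) (coneMeet_add_le hC0 hCgen hg hh) u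
  refine ⟨H, fun x hx => ⟨?_, ?_, ?_⟩, hHu⟩
  · simpa using (hHle (-x)).trans (coneMeet_le hg hh hC0 hC0 (by simpa using hx))
  · simpa using (hHle x).trans (coneMeet_le hg hh hx hC0 (by rwa [add_zero, sub_self]))
  · simpa using (hHle x).trans (coneMeet_le hg hh hC0 hx (by rwa [zero_add, sub_self]))

end ConeMeet

section LatticeGroup

variable {α : Type*} [Lattice α] [AddCommGroup α] [AddLeftMono α]

theorem neg_negPart_le (x : α) : -x⁻ ≤ x :=
  neg_le.1 (neg_le_negPart x)

theorem exists_add_of_le_add {v w z : α} (hz : 0 ≤ z) (hv : 0 ≤ v) (hw : 0 ≤ w)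
    (hzvw : z ≤ v + w) : ∃ z₁ z₂, 0 ≤ z₁ ∧ z₁ ≤ v ∧ 0 ≤ z₂ ∧ z₂ ≤ w ∧ z = z₁ + z₂ := by
  refine ⟨z ⊓ v, z - z ⊓ v, le_inf hz hv, inf_le_right, sub_nonneg.2 inf_le_left, ?_, by abel⟩
  rw [sub_inf, sub_self]
  exact sup_le hw (sub_le_iff_le_add.2 (by rwa [add_comm]))

end LatticeGroup

section AlmostNonneg

variable {E : Type*} [Lattice E] [AddCommGroup E] [Module ℝ E] {f : E →ₗ[ℝ] ℝ}

variable (f) in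
def almostNonneg : Set E := {x | f x⁻ = 0}

theorem smul_mem_almostNonneg (hq : ∀ c : ℝ, 0 < c → ∀ x : E, f (c • x)⁺ = c * f x⁺)
    {c : ℝ} (hc : 0 < c) {x : E} (hx : x ∈ almostNonneg f) : c • x ∈ almostNonneg f := by
  change f (-(c • x))⁺ = 0
  rw [← smul_neg, hq c hc, posPart_neg, hx, mul_zero]

variable [CovariantClass E E (· + ·) (· ≤ ·)]

theorem monotone_of_map_nonneg_s11 (hf : ∀ x, 0 ≤ x → 0 ≤ f x) : Monotone f := fun a b hab => by
  have := hf _ (sub_nonneg.2 hab)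
  rwa [map_sub, sub_nonneg] at this

theorem map_nonneg_of_mem_almostNonneg {G : E →ₗ[ℝ] ℝ} (hG : ∀ x, 0 ≤ x → 0 ≤ G x)
    (hGf : ∀ x, 0 ≤ x → G x ≤ f x) {x : E} (hx : x ∈ almostNonneg f) : 0 ≤ G x := by
  have h_pos := hG _ (posPart_nonneg x)
  have h_neg := hGf _ (negPart_nonneg x)
  have h_null : f x⁻ = 0 := hx
  rw [← posPart_sub_negPart x, map_sub]
  linarith

theorem map_le_map_of_sub_mem_almostNonneg {G : E →ₗ[ℝ] ℝ} (hG : ∀ x, 0 ≤ x → 0 ≤ G x)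
    (hGf : ∀ x, 0 ≤ x → G x ≤ f x) {x y : E} (hxy : y - x ∈ almostNonneg f) : G x ≤ G y := by
  simpa using map_nonneg_of_mem_almostNonneg hG hGf hxy

section

variable (hf : ∀ x, 0 ≤ x → 0 ≤ f x)
include hf

theorem mem_almostNonneg_of_neg_le {x z : E} (hz : 0 ≤ z) (hfz : f z = 0) (hzx : -z ≤ x) :
    x ∈ almostNonneg f := by
  have hle : x⁻ ≤ z := by
    simpa [negPart_neg, posPart_eq_self.2 hz] using negPart_anti hzx
  exact le_antisymm (hfz ▸ monotone_of_map_nonneg_s11 hf hle) (hf _ (negPart_nonneg x))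

theorem mem_almostNonneg_of_nonneg {x : E} (hx : 0 ≤ x) : x ∈ almostNonneg f :=
  mem_almostNonneg_of_neg_le hf le_rfl (map_zero f) (by rwa [neg_zero])

theorem mem_almostNonneg_of_le {x y : E} (hx : x ∈ almostNonneg f) (hxy : x ≤ y) :
    y ∈ almostNonneg f :=
  mem_almostNonneg_of_neg_le hf (negPart_nonneg x) hx ((neg_negPart_le x).trans hxy)

theorem add_mem_almostNonneg {x y : E} (hx : x ∈ almostNonneg f) (hy : y ∈ almostNonneg f) :
    x + y ∈ almostNonneg f := by
  refine mem_almostNonneg_of_neg_le hf (add_nonneg (negPart_nonneg x) (negPart_nonneg y))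
    (by rw [map_add, hx, hy, add_zero]) ?_
  rw [neg_add]
  exact add_le_add (neg_negPart_le x) (neg_negPart_le y)

theorem inf_mem_almostNonneg {x y : E} (hx : x ∈ almostNonneg f) (hy : y ∈ almostNonneg f) :
    x ⊓ y ∈ almostNonneg f := by
  refine mem_almostNonneg_of_neg_le hf (add_nonneg (negPart_nonneg x) (negPart_nonneg y))
    (by rw [map_add, hx, hy, add_zero]) (le_inf ?_ ?_)
  · exact (neg_le_neg_iff.2 (le_add_of_nonneg_right (negPart_nonneg y))).trans (neg_negPart_le x)
  · exact (neg_le_neg_iff.2 (le_add_of_nonneg_left (negPart_nonneg x))).trans (neg_negPart_le y)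

theorem exists_add_eq_le_of_mem_almostNonneg {g h : E →ₗ[ℝ] ℝ} (hg : ∀ x, 0 ≤ x → 0 ≤ g x)
    (hgf : ∀ x, 0 ≤ x → g x ≤ f x) (hh : ∀ x, 0 ≤ x → 0 ≤ h x) (hhf : ∀ x, 0 ≤ x → h x ≤ f x)
    {u a b : E} (hu : 0 ≤ u) (ha : a ∈ almostNonneg f) (hb : b ∈ almostNonneg f)
    (hab : a + b - u ∈ almostNonneg f) :
    ∃ a' b', 0 ≤ a' ∧ 0 ≤ b' ∧ a' + b' = u ∧ g a' ≤ g a ∧ h b' ≤ h b := by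
  refine ⟨u - u ⊓ b⁺, u ⊓ b⁺, sub_nonneg.2 inf_le_left, le_inf hu (posPart_nonneg b),
    sub_add_cancel u _, ?_, ?_⟩
  · refine map_le_map_of_sub_mem_almostNonneg hg hgf (mem_almostNonneg_of_le hf
      (inf_mem_almostNonneg hf ha hab) ?_)
    calc a ⊓ (a + b - u) = a - u + u ⊓ b := by rw [add_inf]; abel_nf
      _ ≤ a - u + u ⊓ b⁺ := add_le_add_right (inf_le_inf_left u (le_posPart b)) _
      _ = a - (u - u ⊓ b⁺) := by abel
  · refine map_le_map_of_sub_mem_almostNonneg hh hhf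
      (mem_almostNonneg_of_neg_le hf (negPart_nonneg b) hb ?_)
    calc -b⁻ = b - b⁺ := eq_sub_of_add_eq (by rw [neg_add_eq_sub, posPart_sub_negPart])
      _ ≤ b - u ⊓ b⁺ := sub_le_sub_left inf_le_right b

end

theorem exists_add_eq_of_disjointFunc (hf : ∀ x, 0 ≤ x → 0 ≤ f x)
    (hq : ∀ c : ℝ, 0 < c → ∀ x : E, f (c • x)⁺ = c * f x⁺) {g h : E →ₗ[ℝ] ℝ}
    (hg : ∀ x, 0 ≤ x → 0 ≤ g x) (hgf : ∀ x, 0 ≤ x → g x ≤ f x)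
    (hh : ∀ x, 0 ≤ x → 0 ≤ h x) (hhf : ∀ x, 0 ≤ x → h x ≤ f x) (hgh : DisjointFunc g h)
    {u : E} (hu : 0 ≤ u) {δ : ℝ} (hδ : 0 < δ) :
    ∃ a b, 0 ≤ a ∧ 0 ≤ b ∧ a + b = u ∧ g a < δ ∧ h b < δ := by
  let C : ConvexCone ℝ E :=
    ⟨almostNonneg f, fun _ hc _ hx => smul_mem_almostNonneg hq hc hx,
      fun _ hx _ hy => add_mem_almostNonneg hf hx hy⟩
  have hC : ∀ x, 0 ≤ x → x ∈ C := fun _ hx => mem_almostNonneg_of_nonneg hf hx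
  have hCgen : ∀ x, ∃ a ∈ C, a - x ∈ C := fun x =>
    ⟨x⁺, hC _ (posPart_nonneg x), hC _ (sub_nonneg.2 (le_posPart x))⟩
  have hgC : ∀ x ∈ C, 0 ≤ g x := fun _ hx => map_nonneg_of_mem_almostNonneg hg hgf hx
  have hhC : ∀ x ∈ C, 0 ≤ h x := fun _ hx => map_nonneg_of_mem_almostNonneg hh hhf hx
  obtain ⟨H, hH, hHu⟩ := exists_linear_le_coneMeet (hC 0 le_rfl) hCgen hgC hhC u
  have hH0 : H = 0 := hgh H (fun x hx => (hH x (hC x hx)).1)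
    (fun x hx => (hH x (hC x hx)).2.1) (fun x hx => (hH x (hC x hx)).2.2)
  obtain ⟨_, ⟨a, ha, b, hb, hab, rfl⟩, hlt⟩ :=
    exists_lt_of_csInf_lt (meetCandidates_nonempty (hC 0 le_rfl) hCgen u)
      (show coneMeet C g h u < δ by rwa [← hHu, hH0])
  obtain ⟨a', b', ha', hb', hab', hga, hhb⟩ :=
    exists_add_eq_le_of_mem_almostNonneg hf hg hgf hh hhf hu ha hb hab
  exact ⟨a', b', ha', hb', hab', by linarith [hhC b hb], by linarith [hgC a ha]⟩

end AlmostNonneg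

section Approximation

variable {E : Type*} [Lattice E] [AddCommGroup E] [Module ℝ E]
  [CovariantClass E E (· + ·) (· ≤ ·)]

theorem abs_sub_le_of_le_add {f P g : E →ₗ[ℝ] ℝ} (hP : ∀ x, 0 ≤ x → 0 ≤ P x)
    (hPf : ∀ x, 0 ≤ x → P x ≤ f x) (hg : ∀ x, 0 ≤ x → 0 ≤ g x) (hgf : ∀ x, 0 ≤ x → g x ≤ f x)
    {v w : E} {ε : ℝ} (hv : 0 ≤ v) (hw : 0 ≤ w) (hgv : f v - g v ≤ ε) (hPv : f v - P v ≤ ε)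
    (hPw : P w ≤ ε) (hgw : g w ≤ ε) {z : E} (hz : 0 ≤ z) (hzvw : z ≤ v + w) :
    |P z - g z| ≤ 2 * ε := by
  obtain ⟨z₁, z₂, hz₁, hz₁v, hz₂, hz₂w, rfl⟩ := exists_add_of_le_add hz hv hw hzvw
  have hfg : ∀ x, 0 ≤ x → 0 ≤ (f - g) x := fun x hx => sub_nonneg.2 (hgf x hx)
  have hfP : ∀ x, 0 ≤ x → 0 ≤ (f - P) x := fun x hx => sub_nonneg.2 (hPf x hx)
  have h₁ := monotone_of_map_nonneg_s11 hfg hz₁v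
  have h₂ := monotone_of_map_nonneg_s11 hfP hz₁v
  have h₃ := monotone_of_map_nonneg_s11 hP hz₂w
  have h₄ := monotone_of_map_nonneg_s11 hg hz₂w
  have h₅ := hfg z₁ hz₁
  have h₆ := hfP z₁ hz₁
  have h₇ := hP z₂ hz₂
  have h₈ := hg z₂ hz₂
  simp only [LinearMap.sub_apply] at h₁ h₂ h₅ h₆
  rw [abs_le, map_add, map_add]
  constructor <;> linarith

theorem abs_map_le_of_abs_le {Q : E →ₗ[ℝ] ℝ} {u : E} {η : ℝ}
    (hQ : ∀ z, 0 ≤ z → z ≤ u → |Q z| ≤ η) {x : E} (hx : |x| ≤ u) : |Q x| ≤ 2 * η := by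
  rw [← posPart_add_negPart] at hx
  have h_pos := hQ _ (posPart_nonneg x) ((le_add_of_nonneg_right (negPart_nonneg x)).trans hx)
  have h_neg := hQ _ (negPart_nonneg x) ((le_add_of_nonneg_left (posPart_nonneg x)).trans hx)
  rw [← posPart_sub_negPart x, map_sub, two_mul]
  exact (abs_sub _ _).trans (add_le_add h_pos h_neg)

theorem abs_sub_le_of_posPart_sub_lt {f P g : E →ₗ[ℝ] ℝ} (hP : ∀ x, 0 ≤ x → 0 ≤ P x)
    (hPf : ∀ x, 0 ≤ x → P x ≤ f x) (hg : ∀ x, 0 ≤ x → 0 ≤ g x) (hgf : ∀ x, 0 ≤ x → g x ≤ f x)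
    {v w : E} {δ : ℝ} (hv : 0 ≤ v) (hw : 0 ≤ w) (hPvw : f (v - w)⁺ - δ < P (v - w))
    (hgw : g w ≤ δ) (hgv : f v - g v ≤ δ) {z : E} (hz : 0 ≤ z) (hzvw : z ≤ v + w) :
    |P z - g z| ≤ 6 * δ := by
  have h_sup : g (v - w) ≤ f (v - w)⁺ :=
    (monotone_of_map_nonneg_s11 hg (le_posPart _)).trans (hgf _ (posPart_nonneg _))
  have hPv := hPf v hv
  have hPw := hP w hw
  have hgv' := hgf v hv
  rw [map_sub] at h_sup hPvw
  have := abs_sub_le_of_le_add (ε := 3 * δ) hP hPf hg hgf hv hw (by linarith) (by linarith)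
    (by linarith) (by linarith) hz hzvw
  linarith

end Approximation

/-- A fragment `g` of `f` lies in the weak-* closure of `Ps(f)`: for every finite
family `x₁, …, xₙ` and `ε > 0` there is `p ∈ Ps` with `|p f (xᵢ) - g (xᵢ)| ≤ ε`. -/
theorem stmt11 {E : Type*} [Lattice E] [AddCommGroup E] [Module ℝ E]
    [CovariantClass E E (· + ·) (· ≤ ·)]
    (f g : E →ₗ[ℝ] ℝ) (hf : ∀ x, 0 ≤ x → 0 ≤ f x)
    (hg : ∀ x, 0 ≤ x → 0 ≤ g x) (hgf : ∀ x, 0 ≤ x → g x ≤ f x)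
    (Ps : Set ((E →ₗ[ℝ] ℝ) →ₗ[ℝ] (E →ₗ[ℝ] ℝ)))
    (hPs : ∀ p ∈ Ps, IsBandProj p)
    (hgen : ∀ x : E, IsLUB {r : ℝ | ∃ p ∈ Ps, r = (p f) x} (f (x ⊔ 0)))
    (hfrag : DisjointFunc g (f - g)) :
    ∀ (n : ℕ) (x : Fin n → E) (ε : ℝ), 0 < ε →
      ∃ p ∈ Ps, ∀ i, |(p f) (x i) - g (x i)| ≤ ε := by
  intro n x ε hε
  have hq : ∀ c : ℝ, 0 < c → ∀ z : E, f (c • z)⁺ = c * f z⁺ := fun c hc z =>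
    pos_homogeneous_of_isLUB (S := Ps) (F := fun z => f z⁺) (fun p => p f) hgen hc z
  have hδ : 0 < ε / 12 := by positivity
  obtain ⟨u, hu⟩ := (Set.finite_range fun i => |x i|).bddAbove
  obtain ⟨w, v, hw, hv, hwv, hgw, hfgv⟩ := exists_add_eq_of_disjointFunc hf hq hg hgf
    (fun z hz => sub_nonneg.2 (hgf z hz)) (fun z hz => sub_le_self _ (hg z hz)) hfrag
    (posPart_nonneg u) hδ
  obtain ⟨_, ⟨p, hp, rfl⟩, hpvw, -⟩ := (hgen (v - w)).exists_between (sub_lt_self _ hδ)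
  have hP := (hPs p hp).2 f hf
  refine ⟨p, hp, fun i => ?_⟩
  have h_approx : ∀ z, 0 ≤ z → z ≤ v + w → |(p f - g) z| ≤ 6 * (ε / 12) := fun z hz hzvw =>
    abs_sub_le_of_posPart_sub_lt (fun z hz => (hP z hz).1) (fun z hz => (hP z hz).2) hg hgf
      hv hw hpvw hgw.le hfgv.le hz hzvw
  have hxi : |x i| ≤ v + w := (hu ⟨i, rfl⟩).trans (by rw [add_comm, hwv]; exact le_posPart u)
  have := abs_map_le_of_abs_le h_approx hxi
  rw [LinearMap.sub_apply] at this
  linarith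
end

section
/- Farkas Lemma for sublinear functionals with polyhedral constraint: let X be a real vector space, P : X → ℝ a polyhedral sublinear functional (maximum of finitely many linear functionals), Q : X → ℝ a sublinear functional, and u, v ∈ ℝ with { x : P(x) ≤ u } nonempty. Then { x : P(x) ≤ u } ⊆ { x : Q(−x) ≥ −v } if and only if there exist a linear functional A ∈ ∂P, a linear functional B ∈ ∂Q, and a scalar α ≥ 0 with B = α A and α u ≤ v. -/
/-!
Homogenize: with `y = -x`, the hypothesis says `Q y + t v ≥ 0` on the polyhedral cone
`{(y, t) | t ≥ 0, ℓᵢ y + u t ≥ 0}` in `X × ℝ` (for `t > 0` by scaling, for `t = 0` by a recession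
argument from a feasible point). A Farkas lemma for sublinear functionals then gives `λᵢ, μ ≥ 0`
with `∑ λᵢ (ℓᵢ y + u t) + μ t ≤ Q y + t v`. At `t = 0` this says `B := ∑ λᵢ ℓᵢ ∈ ∂Q`, at
`(y, t) = (0, 1)` it gives `α u ≤ v` for `α = ∑ λᵢ`, and `B = α A` with `A ∈ conv {ℓᵢ} = ∂P`.

The Farkas lemma is proved by induction on the constraints. A constraint `f` that is strictly
satisfiable on the cone cut out by the others is absorbed into `R` as `R - μ f`, with `μ` found by
a one-dimensional Hahn–Banach argument. If no constraint is, each `-f` is itself a conical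
combination of the constraints, so their cone is a subspace and algebraic Hahn–Banach on the
common kernel finishes.
-/

open PointedCone

lemma LinearMap.eq_of_forall_le {X : Type*} [AddCommGroup X] [Module ℝ X] {f g : X →ₗ[ℝ] ℝ}
    (h : ∀ x, f x ≤ g x) : f = g :=
  LinearMap.ext fun x => le_antisymm (h x) (by simpa using h (-x))

lemma PointedCone.span_subset_hull_of_neg_mem {E : Type*} [AddCommGroup E] [Module ℝ E]
    {s : Set E} (hs : ∀ x ∈ s, -x ∈ hull ℝ s) :
    (Submodule.span ℝ s : Set E) ⊆ hull ℝ s := fun _ hx =>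
  (mem_lineal.1 <| (Submodule.span_le (p := (hull ℝ s).lineal)).2
    (fun x hx => mem_lineal.2 ⟨subset_hull hx, hs x hx⟩) hx).1

structure IsSublinear {X : Type*} [AddCommGroup X] [Module ℝ X] (R : X → ℝ) : Prop where
  map_add_le : ∀ x y, R (x + y) ≤ R x + R y
  map_smul_of_nonneg : ∀ c : ℝ, 0 ≤ c → ∀ x, R (c • x) = c * R x

namespace IsSublinear

variable {X Y : Type*} [AddCommGroup X] [Module ℝ X] [AddCommGroup Y] [Module ℝ Y] {R : X → ℝ}

lemma map_zero (hR : IsSublinear R) : R 0 = 0 := by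
  simpa using hR.map_smul_of_nonneg 0 le_rfl 0

lemma _root_.LinearMap.isSublinear (f : X →ₗ[ℝ] ℝ) : IsSublinear f :=
  ⟨fun x y => (map_add f x y).le, fun c _ x => by simp⟩

lemma comp (hR : IsSublinear R) (g : Y →ₗ[ℝ] X) : IsSublinear (R ∘ g) :=
  ⟨fun x y => by simpa using hR.map_add_le (g x) (g y),
    fun c hc x => by simpa using hR.map_smul_of_nonneg c hc (g x)⟩

lemma add_linearMap (hR : IsSublinear R) (f : X →ₗ[ℝ] ℝ) : IsSublinear (fun x => R x + f x) :=
  ⟨fun x y => by linarith [hR.map_add_le x y, map_add f x y],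
    fun c hc x => by simp [hR.map_smul_of_nonneg c hc, mul_add]⟩

lemma nonneg_of_forall_le_add_smul (hR : IsSublinear R) {K : ℝ} {x y : X}
    (h : ∀ c : ℝ, 0 ≤ c → K ≤ R (x + c • y)) : 0 ≤ R y := by
  by_contra! hy
  set c := (|K - R x| + 1) / -R y
  have hc : 0 ≤ c := div_nonneg (by positivity) (by linarith)
  have hcy : c * R y = -(|K - R x| + 1) := by
    simp only [c]; field_simp [hy.ne]
  have := (h c hc).trans (hR.map_add_le _ _)
  rw [hR.map_smul_of_nonneg c hc, hcy] at this
  linarith [neg_abs_le (K - R x)]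

lemma div_le_div_of_mem_cone (hR : IsSublinear R) {C : PointedCone ℝ X} {g : X →ₗ[ℝ] ℝ}
    (hC : ∀ x ∈ C, g x = 0 → 0 ≤ R x) {z w : X} (hz : z ∈ C) (hw : w ∈ C)
    (hgz : g z < 0) (hgw : 0 < g w) : R z / g z ≤ R w / g w := by
  have hmem : g w • z + (-g z) • w ∈ C :=
    C.add_mem (C.smul_mem hgw.le hz) (C.smul_mem (by linarith) hw)
  have hker : g (g w • z + (-g z) • w) = 0 := by
    simp only [map_add, map_smul, smul_eq_mul]; ring
  have hsub := (hC _ hmem hker).trans (hR.map_add_le _ _)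
  rw [hR.map_smul_of_nonneg _ hgw.le, hR.map_smul_of_nonneg _ (by linarith)] at hsub
  rw [div_le_iff_of_neg hgz, div_mul_eq_mul_div, div_le_iff₀ hgw]
  linarith

lemma exists_smul_le_of_nonneg_on_halfspace (hR : IsSublinear R) {C : PointedCone ℝ X}
    {g : X →ₗ[ℝ] ℝ} (hC : ∀ x ∈ C, 0 ≤ g x → 0 ≤ R x) (hslater : ∃ y ∈ C, 0 < g y) :
    ∃ μ : ℝ, 0 ≤ μ ∧ ∀ x ∈ C, μ * g x ≤ R x := by
  set S := (fun w => R w / g w) '' {w | w ∈ C ∧ 0 < g w}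
  obtain ⟨y, hyC, hgy⟩ := hslater
  have hS : S.Nonempty := ⟨_, y, ⟨hyC, hgy⟩, rfl⟩
  have hS0 : ∀ r ∈ S, 0 ≤ r := by
    rintro _ ⟨w, ⟨hwC, hgw⟩, rfl⟩
    exact div_nonneg (hC w hwC hgw.le) hgw.le
  refine ⟨sInf S, le_csInf hS hS0, fun x hx => ?_⟩
  rcases lt_trichotomy (g x) 0 with hgx | hgx | hgx
  · have : R x / g x ≤ sInf S := le_csInf hS <| by
      rintro _ ⟨w, ⟨hwC, hgw⟩, rfl⟩
      exact hR.div_le_div_of_mem_cone (fun x hx h => hC x hx h.ge) hx hwC hgx hgw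
    rwa [div_le_iff_of_neg hgx] at this
  · simpa [hgx] using hC x hx hgx.ge
  · have : sInf S ≤ R x / g x := csInf_le ⟨0, hS0⟩ ⟨x, ⟨hx, hgx⟩, rfl⟩
    rwa [le_div_iff₀ hgx] at this

lemma exists_mem_span_le_of_nonneg_on_ker (hR : IsSublinear R) (T : Finset (X →ₗ[ℝ] ℝ))
    (hT : ∀ x, (∀ f ∈ T, f x = 0) → 0 ≤ R x) :
    ∃ B ∈ Submodule.span ℝ (T : Set (X →ₗ[ℝ] ℝ)), ∀ x, B x ≤ R x := by
  obtain ⟨B, hB0, hBR⟩ := exists_extension_of_le_sublinear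
    ⟨⨅ f : T, LinearMap.ker (f : X →ₗ[ℝ] ℝ), 0⟩ R
    (fun c hc => hR.map_smul_of_nonneg c hc.le) hR.map_add_le
    (fun ⟨x, hx⟩ => hT x fun f hf => by simpa using (Submodule.mem_iInf _).1 hx ⟨f, hf⟩)
  refine ⟨B, ?_, hBR⟩
  simpa using mem_span_of_iInf_ker_le_ker (L := ((↑) : T → X →ₗ[ℝ] ℝ)) fun x hx => hB0 ⟨x, hx⟩

/-- `dual LinearMap.id T` is the cone `{x | ∀ f ∈ T, 0 ≤ f x}`. -/
theorem exists_mem_hull_le_of_nonneg_on_dual (T : Finset (X →ₗ[ℝ] ℝ)) (hR : IsSublinear R)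
    (hT : ∀ x ∈ dual LinearMap.id (T : Set (X →ₗ[ℝ] ℝ)), 0 ≤ R x) :
    ∃ B ∈ hull ℝ (T : Set (X →ₗ[ℝ] ℝ)), ∀ x, B x ≤ R x := by
  classical
  induction T using Finset.strongInduction generalizing R with
  | H T ih =>
  have mem_dual_of_erase : ∀ f ∈ T, ∀ x ∈ dual LinearMap.id (T.erase f : Set (X →ₗ[ℝ] ℝ)),
      0 ≤ f x → x ∈ dual LinearMap.id (T : Set (X →ₗ[ℝ] ℝ)) := by
    intro f hf x hx hfx g hg
    by_cases hgf : g = f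
    · exact hgf ▸ hfx
    · exact hx (Finset.mem_erase.2 ⟨hgf, hg⟩)
  by_cases hslater : ∃ f ∈ T, ∃ y ∈ dual LinearMap.id (T.erase f : Set (X →ₗ[ℝ] ℝ)), 0 < f y
  · obtain ⟨f, hf, hy⟩ := hslater
    obtain ⟨μ, hμ, hμR⟩ := hR.exists_smul_le_of_nonneg_on_halfspace
      (fun x hx hfx => hT x (mem_dual_of_erase f hf x hx hfx)) hy
    obtain ⟨B, hB, hBR⟩ := ih _ (Finset.erase_ssubset hf) (hR.add_linearMap (-(μ • f)))
      (fun x hx => by simpa using hμR x hx)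
    refine ⟨B + μ • f, add_mem (Submodule.span_mono (by simp) hB)
      (smul_mem _ hμ (subset_hull hf)), fun x => ?_⟩
    simpa [add_comm] using hBR x
  · push Not at hslater
    have hneg : ∀ f ∈ (T : Set (X →ₗ[ℝ] ℝ)), -f ∈ hull ℝ (T : Set (X →ₗ[ℝ] ℝ)) := by
      intro f hf
      obtain ⟨B, hB, hBf⟩ := ih _ (Finset.erase_ssubset hf) (-f).isSublinear
        (fun x hx => by simpa using hslater f hf x hx)
      rw [← LinearMap.eq_of_forall_le hBf]
      exact Submodule.span_mono (by simp) hB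
    obtain ⟨B, hB, hBR⟩ := hR.exists_mem_span_le_of_nonneg_on_ker T
      (fun x hx => hT x fun f hf => (hx f hf).ge)
    exact ⟨B, span_subset_hull_of_neg_mem hneg hB, hBR⟩

end IsSublinear

section

variable {X : Type*} [AddCommGroup X] [Module ℝ X] {ι : Type*}

open LinearMap

lemma IsSublinear.nonneg_add_mul_of_homogenized {Q : X → ℝ} (hQ : IsSublinear Q)
    {ℓ : ι → X →ₗ[ℝ] ℝ} {u v : ℝ} (hfeas : ∃ y, ∀ i, 0 ≤ ℓ i y + u)
    (hsub : ∀ y, (∀ i, 0 ≤ ℓ i y + u) → -v ≤ Q y) {y : X} {t : ℝ} (ht : 0 ≤ t)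
    (hy : ∀ i, 0 ≤ ℓ i y + u * t) : 0 ≤ Q y + t * v := by
  rcases ht.eq_or_lt with rfl | ht
  · obtain ⟨y₀, hy₀⟩ := hfeas
    have hrec : ∀ c : ℝ, 0 ≤ c → -v ≤ Q (y₀ + c • y) := fun c hc =>
      hsub _ fun i => by
        have := mul_nonneg hc (by simpa using hy i)
        simp only [map_add, map_smul, smul_eq_mul]
        linarith [hy₀ i]
    simpa using hQ.nonneg_of_forall_le_add_smul hrec
  · have := hsub (t⁻¹ • y) fun i => by
      have hscale : ℓ i (t⁻¹ • y) + u = t⁻¹ * (ℓ i y + u * t) := by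
        rw [map_smul, smul_eq_mul]; field_simp
      exact hscale ▸ mul_nonneg (inv_nonneg.2 ht.le) (hy i)
    rw [hQ.map_smul_of_nonneg _ (inv_nonneg.2 ht.le), le_inv_mul_iff₀ ht] at this
    linarith

lemma exists_le_smul_of_mem_hull {P : X → ℝ} {ℓ : ι → X →ₗ[ℝ] ℝ} (hℓP : ∀ i x, ℓ i x ≤ P x)
    {u : ℝ} {B : X × ℝ →ₗ[ℝ] ℝ} (hB : B ∈ PointedCone.hull ℝ
      (insert (snd ℝ X ℝ) (Set.range fun i => (ℓ i).comp (fst ℝ X ℝ) + u • snd ℝ X ℝ))) :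
    ∃ α : ℝ, 0 ≤ α ∧ α * u ≤ B (0, 1) ∧ ∀ y, B (y, 0) ≤ α * P y := by
  induction hB using Submodule.span_induction with
  | mem B hB =>
    rcases hB with rfl | ⟨i, rfl⟩
    · exact ⟨0, le_rfl, by simp, by simp⟩
    · exact ⟨1, zero_le_one, by simp, by simpa using hℓP i⟩
  | zero => exact ⟨0, le_rfl, by simp, by simp⟩
  | add B B' _ _ hB hB' =>
    obtain ⟨α, hα, hαu, hαP⟩ := hB
    obtain ⟨β, hβ, hβu, hβP⟩ := hB'
    exact ⟨α + β, add_nonneg hα hβ, by simp only [LinearMap.add_apply]; linarith,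
      fun y => by simp only [LinearMap.add_apply]; linarith [hαP y, hβP y]⟩
  | smul a B _ hB =>
    obtain ⟨α, hα, hαu, hαP⟩ := hB
    refine ⟨a * α, mul_nonneg a.2 hα, ?_, fun y => ?_⟩
    · simpa [← Nonneg.coe_smul, mul_assoc] using mul_le_mul_of_nonneg_left hαu a.2
    · simpa [← Nonneg.coe_smul, mul_assoc] using mul_le_mul_of_nonneg_left (hαP y) a.2

lemma exists_eq_smul_of_le_smul {P : X → ℝ} {A₀ : X →ₗ[ℝ] ℝ} (hA₀ : ∀ x, A₀ x ≤ P x)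
    {C : X →ₗ[ℝ] ℝ} {α : ℝ} (hα : 0 ≤ α) (hC : ∀ x, C x ≤ α * P x) :
    ∃ A : X →ₗ[ℝ] ℝ, (∀ x, A x ≤ P x) ∧ C = α • A := by
  rcases hα.eq_or_lt with rfl | hα
  · exact ⟨A₀, hA₀, by simpa using LinearMap.eq_of_forall_le (g := 0) (by simpa using hC)⟩
  · refine ⟨α⁻¹ • C, fun x => ?_, by rw [smul_smul, mul_inv_cancel₀ hα.ne', one_smul]⟩
    simpa using (inv_mul_le_iff₀ hα).2 (hC x)

theorem IsSublinear.exists_le_smul_of_subset [Fintype ι] {Q : X → ℝ} (hQ : IsSublinear Q)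
    {P : X → ℝ} {ℓ : ι → X →ₗ[ℝ] ℝ} (hℓP : ∀ i x, ℓ i x ≤ P x) {u v : ℝ}
    (hfeas : ∃ x, ∀ i, ℓ i x ≤ u) (hsub : ∀ x, (∀ i, ℓ i x ≤ u) → -v ≤ Q (-x)) :
    ∃ (B : X →ₗ[ℝ] ℝ) (α : ℝ), (∀ x, B x ≤ Q x) ∧ 0 ≤ α ∧ α * u ≤ v ∧ ∀ x, B x ≤ α * P x := by
  classical
  have hsub' : ∀ y, (∀ i, 0 ≤ ℓ i y + u) → -v ≤ Q y := fun y hy => by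
    simpa using hsub (-y) fun i => by linarith [hy i, map_neg (ℓ i) y]
  have hfeas' : ∃ y, ∀ i, 0 ≤ ℓ i y + u := by
    obtain ⟨x, hx⟩ := hfeas
    exact ⟨-x, fun i => by linarith [hx i, map_neg (ℓ i) x]⟩
  let T := insert (snd ℝ X ℝ) (Finset.univ.image fun i => (ℓ i).comp (fst ℝ X ℝ) + u • snd ℝ X ℝ)
  have hR := (hQ.comp (fst ℝ X ℝ)).add_linearMap (v • snd ℝ X ℝ)
  obtain ⟨B, hBT, hBR⟩ := hR.exists_mem_hull_le_of_nonneg_on_dual T fun p hp => by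
    simp only [Finset.coe_insert, Finset.coe_image, Finset.coe_univ, Set.image_univ, mem_dual,
      Set.mem_insert_iff, Set.mem_range, id_coe, id_eq, forall_eq_or_imp, snd_apply,
      forall_exists_index, forall_apply_eq_imp_iff, LinearMap.add_apply, coe_comp, coe_fst,
      Function.comp_apply, LinearMap.smul_apply, smul_eq_mul, T] at hp
    simpa [mul_comm v] using hQ.nonneg_add_mul_of_homogenized hfeas' hsub' hp.1 hp.2
  obtain ⟨α, hα, hαu, hBP⟩ := exists_le_smul_of_mem_hull hℓP (by simpa [T] using hBT)
  refine ⟨B.comp (inl ℝ X ℝ), α, fun y => by simpa using hBR (y, 0), hα, ?_, hBP⟩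
  simpa [hQ.map_zero] using hαu.trans (hBR (0, 1))

end

/-- Interval Farkas lemma with a polyhedral sublinear constraint:
`{P ≤ u} ⊆ {Q(−·) ≥ −v}` iff there are `A ∈ ∂P`, `B ∈ ∂Q` and `α ≥ 0` with
`B = α A` and `α u ≤ v`. -/
theorem stmt12 {X : Type*} [AddCommGroup X] [Module ℝ X]
    (N : ℕ) (hN : N ≠ 0) (ℓ : Fin N → X →ₗ[ℝ] ℝ) (P : X → ℝ)
    (hP : ∀ x, P x = Finset.univ.sup'
      (Finset.univ_nonempty_iff.mpr ⟨⟨0, Nat.pos_of_ne_zero hN⟩⟩)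
      (fun i => ℓ i x))
    (Q : X → ℝ)
    (hQadd : ∀ x y, Q (x + y) ≤ Q x + Q y)
    (hQhom : ∀ (c : ℝ), 0 ≤ c → ∀ x, Q (c • x) = c * Q x)
    (u v : ℝ) (hfeas : ∃ x, P x ≤ u) :
    ({x | P x ≤ u} ⊆ {x | -v ≤ Q (-x)}) ↔
      ∃ (A B : X →ₗ[ℝ] ℝ) (α : ℝ),
        (∀ x, A x ≤ P x) ∧ (∀ x, B x ≤ Q x) ∧
        0 ≤ α ∧ B = α • A ∧ α * u ≤ v := by
  have hℓP : ∀ i x, ℓ i x ≤ P x := fun i x =>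
    hP x ▸ Finset.le_sup' (fun i => ℓ i x) (Finset.mem_univ i)
  have hPle : ∀ x, P x ≤ u ↔ ∀ i, ℓ i x ≤ u := fun x => by simp [hP]
  constructor
  · intro hsub
    obtain ⟨B, α, hBQ, hα, hαu, hBP⟩ := IsSublinear.exists_le_smul_of_subset ⟨hQadd, hQhom⟩ hℓP
      (hfeas.imp fun x => (hPle x).1) fun x hx => hsub ((hPle x).2 hx)
    obtain ⟨A, hAP, rfl⟩ := exists_eq_smul_of_le_smul (hℓP ⟨0, Nat.pos_of_ne_zero hN⟩) hα hBP
    exact ⟨A, α • A, α, hAP, hBQ, hα, rfl, hαu⟩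
  · rintro ⟨A, B, α, hA, hB, hα, rfl, hαu⟩ x (hx : P x ≤ u)
    have hBx : -(α * A x) ≤ Q (-x) := by simpa using hB (-x)
    have hAx : α * A x ≤ α * u := mul_le_mul_of_nonneg_left ((hA x).trans hx) hα
    show -v ≤ Q (-x)
    linarith
end

section
/- Polyhedral Lagrange principle (scalar case): let X be a real vector space, P₁, …, P_N : X → ℝ polyhedral sublinear functionals, P : X → ℝ a sublinear functional, and u₁, …, u_N ∈ ℝ such that the feasible set { x : Pᵢ(x) ≤ uᵢ for all i } is nonempty and inf { P(x) : Pᵢ(x) ≤ uᵢ ∀i } = μ > −∞. Then there exist scalars λ₁, …, λ_N ≥ 0 such that inf_{x ∈ X} ( P(x) + Σᵢ λᵢ (Pᵢ(x) − uᵢ) ) = μ. -/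
/-!
Homogenize: on `X × ℝ` the sublinear functional `(x, t) ↦ P x - μ t` is nonnegative on the
polyhedral cone cut out by `t ≥ 0` and `l x ≤ uᵢ t` for the finitely many linear pieces `l` of
the `Pᵢ` (for `t > 0` rescale to a feasible point; for `t = 0` the direction `x` is a recession
direction of the feasible set, along which `P` cannot decrease since it is bounded below by `μ`).
By the M. Riesz extension theorem such a functional dominates a linear functional that is
nonnegative on the cone, and by Farkas' lemma — which is where polyhedrality replaces a
constraint qualification — that linear functional is a nonnegative combination of the defining
functionals. Evaluating at `t = 1` and collecting the coefficients of each `Pᵢ` gives the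
multipliers.
-/

open Finset

theorem farkas {E ι : Type*} [AddCommGroup E] [Module ℝ E] (g : ι → E →ₗ[ℝ] ℝ)
    (s : Finset ι) (h : E →ₗ[ℝ] ℝ) (hgh : ∀ y, (∀ i ∈ s, 0 ≤ g i y) → 0 ≤ h y) :
    ∃ ν : ι → ℝ, (∀ i, 0 ≤ ν i) ∧ h = ∑ i ∈ s, ν i • g i := by
  classical
  induction s using Finset.induction_on generalizing g h with
  | empty =>
    refine ⟨0, fun _ => le_rfl, LinearMap.ext fun y => ?_⟩
    have hy := hgh y (by simp)
    have hny := hgh (-y) (by simp)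
    rw [map_neg] at hny
    rw [sum_empty, LinearMap.zero_apply]
    linarith
  | insert a s ha ih =>
    suffices ∃ κ : ℝ, 0 ≤ κ ∧ ∃ ν : ι → ℝ, (∀ i, 0 ≤ ν i) ∧ h = κ • g a + ∑ i ∈ s, ν i • g i by
      obtain ⟨κ, hκ, ν, hν, rfl⟩ := this
      refine ⟨Function.update ν a κ, fun i => ?_, ?_⟩
      · rcases eq_or_ne i a with rfl | hi <;> simp [*]
      · rw [sum_insert ha, Function.update_self]
        congr 1
        exact sum_congr rfl fun i hi => by rw [Function.update_of_ne (ne_of_mem_of_not_mem hi ha)]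
    by_cases hs : ∀ y, (∀ i ∈ s, 0 ≤ g i y) → 0 ≤ h y
    · obtain ⟨ν, hν, rfl⟩ := ih g h hs
      exact ⟨0, le_rfl, ν, hν, by simp⟩
    push Not at hs
    obtain ⟨v, hv, hhv⟩ := hs
    have hgav : g a v < 0 := by
      by_contra! hgav
      exact hhv.not_ge (hgh v ((forall_mem_insert _ _ _).mpr ⟨hgav, hv⟩))
    obtain ⟨w, hw, hhw, hgaw⟩ : ∃ w, (∀ i ∈ s, 0 ≤ g i w) ∧ h w < 0 ∧ g a w = -1 := by
      refine ⟨(-g a v)⁻¹ • v, fun i hi => ?_, ?_, ?_⟩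
      · simpa using mul_nonneg (inv_nonneg.mpr (neg_nonneg.mpr hgav.le)) (hv i hi)
      · simpa using mul_neg_of_pos_of_neg (inv_pos.mpr (neg_pos.mpr hgav)) hhv
      · simp [hgav.ne]
    -- `π` projects along `w` onto `ker (g a)`, where the constraint `g a` is void; the induction
    -- hypothesis applies to the pulled-back functionals, and `h w < 0` makes the coefficient
    -- of `g a` nonnegative.
    set π : E →ₗ[ℝ] E := LinearMap.id + (g a).smulRight w
    have hπ : ∀ (f : E →ₗ[ℝ] ℝ) y, f (π y) = f y + g a y * f w := by simp [π]
    obtain ⟨ν, hν, hνπ⟩ := ih (fun i => g i ∘ₗ π) (h ∘ₗ π) fun y hy =>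
      hgh (π y) ((forall_mem_insert _ _ _).mpr ⟨by simp [hπ, hgaw], hy⟩)
    refine ⟨∑ i ∈ s, ν i * g i w - h w, ?_, ν, hν, LinearMap.ext fun y => ?_⟩
    · linarith [sum_nonneg fun i hi => mul_nonneg (hν i) (hw i hi)]
    · have hνπy := LinearMap.congr_fun hνπ y
      simp only [LinearMap.comp_apply, LinearMap.sum_apply, LinearMap.smul_apply, smul_eq_mul, hπ,
        mul_add, sum_add_distrib] at hνπy
      simp only [LinearMap.add_apply, LinearMap.sum_apply, LinearMap.smul_apply, smul_eq_mul,
        sub_mul, sum_mul]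
      have hcomm : ∑ i ∈ s, ν i * (g a y * g i w) = ∑ i ∈ s, ν i * g i w * g a y :=
        sum_congr rfl fun i _ => by ring
      linarith

theorem exists_linear_le_of_nonneg_on_cone {E : Type*} [AddCommGroup E] [Module ℝ E]
    (C : PointedCone ℝ E) (Q : E → ℝ) (hQadd : ∀ x y, Q (x + y) ≤ Q x + Q y)
    (hQhom : ∀ c : ℝ, 0 ≤ c → ∀ x, Q (c • x) = c * Q x) (hQC : ∀ z ∈ C, 0 ≤ Q z) :
    ∃ φ : E →ₗ[ℝ] ℝ, (∀ x, φ x ≤ Q x) ∧ ∀ z ∈ C, 0 ≤ φ z := by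
  have hQ0 : Q 0 = 0 := by simpa using hQhom 0 le_rfl 0
  -- The epigraph of `Q` shifted by `C`; a functional `(x, t) ↦ t - φ x` nonnegative on it
  -- has `φ ≤ Q` (take `z = 0`) and `φ ≥ 0` on `C` (the points `(-z, 0)`).
  let K : PointedCone ℝ (E × ℝ) :=
    { carrier := {p | ∃ z ∈ C, Q (p.1 + z) ≤ p.2}
      zero_mem' := ⟨0, C.zero_mem, by simp [hQ0]⟩
      add_mem' := by
        rintro ⟨x, s⟩ ⟨y, t⟩ ⟨z, hz, hxz⟩ ⟨w, hw, hyw⟩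
        refine ⟨z + w, C.add_mem hz hw, ?_⟩
        calc Q (x + y + (z + w)) = Q ((x + z) + (y + w)) := by rw [add_add_add_comm]
          _ ≤ s + t := (hQadd _ _).trans (add_le_add hxz hyw)
      smul_mem' := by
        rintro ⟨c, hc⟩ ⟨x, t⟩ ⟨z, hz, hxz⟩
        refine ⟨c • z, C.smul_mem hc hz, ?_⟩
        simpa [← smul_add, hQhom c hc] using mul_le_mul_of_nonneg_left hxz hc }
  let f : (E × ℝ) →ₗ.[ℝ] ℝ := (LinearMap.snd ℝ E ℝ).toPMap (LinearMap.ker (LinearMap.fst ℝ E ℝ))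
  obtain ⟨G, hGf, hGK⟩ := riesz_extension K f
    (by
      rintro ⟨⟨x, t⟩, rfl : x = 0⟩ ⟨z, hz, hzt⟩
      simpa [f] using (hQC z hz).trans (by simpa using hzt))
    (fun p => ⟨⟨(0, Q p.1 - p.2), rfl⟩, 0, C.zero_mem, by simp⟩)
  have hG : ∀ x t, G (x, t) = G (x, 0) + t := fun x t => by
    rw [show (x, t) = (x, 0) + (0, t) by simp, map_add, hGf ⟨(0, t), rfl⟩]
    rfl
  refine ⟨-(G ∘ₗ LinearMap.inl ℝ E ℝ), fun x => ?_, fun z hz => ?_⟩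
  · have hGx := hGK (x, Q x) ⟨0, C.zero_mem, by simp⟩
    rw [hG] at hGx
    simp only [LinearMap.neg_apply, LinearMap.comp_apply, LinearMap.inl_apply]
    linarith
  · have hGz := hGK (-z, 0) ⟨z, hz, by simp [hQ0]⟩
    rw [show ((-z, 0) : E × ℝ) = -(z, 0) by simp, map_neg] at hGz
    simpa using hGz

theorem exists_nonneg_sum_le_of_nonneg_on_polyhedralCone {E ι : Type*} [AddCommGroup E]
    [Module ℝ E] [Fintype ι] (g : ι → E →ₗ[ℝ] ℝ) (Q : E → ℝ)
    (hQadd : ∀ x y, Q (x + y) ≤ Q x + Q y) (hQhom : ∀ c : ℝ, 0 ≤ c → ∀ x, Q (c • x) = c * Q x)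
    (hQC : ∀ y, (∀ j, 0 ≤ g j y) → 0 ≤ Q y) :
    ∃ ν : ι → ℝ, (∀ j, 0 ≤ ν j) ∧ ∀ y, ∑ j, ν j * g j y ≤ Q y := by
  obtain ⟨φ, hφQ, hφC⟩ := exists_linear_le_of_nonneg_on_cone
    (PointedCone.dual LinearMap.id (Set.range g)) Q hQadd hQhom
    fun y hy => hQC y (by simpa using hy)
  obtain ⟨ν, hν, rfl⟩ := farkas g univ φ fun y hy => hφC y (by simpa using hy)
  exact ⟨ν, hν, fun y => by simpa using hφQ y⟩

section LinearConstraints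

variable {X ι : Type*} [AddCommGroup X] [Module ℝ X] {g : ι → X →ₗ[ℝ] ℝ} {b : ι → ℝ}
  {P : X → ℝ} {μ : ℝ}

theorem nonneg_of_recession (hPadd : ∀ x y, P (x + y) ≤ P x + P y)
    (hPhom : ∀ c : ℝ, 0 ≤ c → ∀ x, P (c • x) = c * P x)
    (hμ : ∀ x, (∀ j, g j x ≤ b j) → μ ≤ P x) {x₀ : X} (hx₀ : ∀ j, g j x₀ ≤ b j) {y : X}
    (hy : ∀ j, g j y ≤ 0) : 0 ≤ P y := by
  by_contra! hPy
  obtain ⟨n, hn⟩ := exists_nat_gt ((P x₀ - μ) / -P y)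
  rw [div_lt_iff₀ (neg_pos.mpr hPy)] at hn
  have hfeas : ∀ j, g j (x₀ + (n : ℝ) • y) ≤ b j := fun j => by
    simpa [map_add, map_smul] using
      add_le_add (hx₀ j) (mul_nonpos_of_nonneg_of_nonpos n.cast_nonneg (hy j))
  have hμn := (hμ _ hfeas).trans (hPadd x₀ ((n : ℝ) • y))
  rw [hPhom _ n.cast_nonneg] at hμn
  linarith

theorem mul_le_of_homogenized_feasible (hPadd : ∀ x y, P (x + y) ≤ P x + P y)
    (hPhom : ∀ c : ℝ, 0 ≤ c → ∀ x, P (c • x) = c * P x)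
    (hμ : ∀ x, (∀ j, g j x ≤ b j) → μ ≤ P x) (hfeas : ∃ x₀, ∀ j, g j x₀ ≤ b j) {x : X} {t : ℝ}
    (ht : 0 ≤ t) (hx : ∀ j, g j x ≤ t * b j) : μ * t ≤ P x := by
  rcases ht.eq_or_lt with rfl | ht
  · obtain ⟨x₀, hx₀⟩ := hfeas
    simpa using nonneg_of_recession hPadd hPhom hμ hx₀ (y := x) (by simpa using hx)
  · have hscaled : ∀ j, g j (t⁻¹ • x) ≤ b j := fun j => by
      rw [map_smul, smul_eq_mul, inv_mul_le_iff₀ ht]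
      exact hx j
    have hμt := hμ _ hscaled
    rwa [hPhom _ (inv_nonneg.mpr ht.le), inv_mul_eq_div, le_div_iff₀ ht] at hμt

theorem exists_lagrange_multipliers_of_linear_constraints [Fintype ι]
    (hPadd : ∀ x y, P (x + y) ≤ P x + P y) (hPhom : ∀ c : ℝ, 0 ≤ c → ∀ x, P (c • x) = c * P x)
    (hμ : ∀ x, (∀ j, g j x ≤ b j) → μ ≤ P x) (hfeas : ∃ x₀, ∀ j, g j x₀ ≤ b j) :
    ∃ ν : ι → ℝ, (∀ j, 0 ≤ ν j) ∧ ∀ x, μ ≤ P x + ∑ j, ν j * (g j x - b j) := by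
  let G : Option ι → (X × ℝ) →ₗ[ℝ] ℝ := fun o =>
    o.elim (LinearMap.snd ℝ X ℝ) fun j => b j • LinearMap.snd ℝ X ℝ - g j ∘ₗ LinearMap.fst ℝ X ℝ
  have hGnone : ∀ x t, G none (x, t) = t := fun _ _ => rfl
  have hGsome : ∀ j x t, G (some j) (x, t) = b j * t - g j x := fun _ _ _ => rfl
  obtain ⟨ν, hν, hνQ⟩ := exists_nonneg_sum_le_of_nonneg_on_polyhedralCone G
    (fun y : X × ℝ => P y.1 - μ * y.2)
    (fun y z => by simp only [Prod.fst_add, Prod.snd_add]; linarith [hPadd y.1 z.1])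
    (fun c hc y => by simp only [Prod.smul_fst, Prod.smul_snd, smul_eq_mul, hPhom c hc]; ring)
    (fun ⟨x, t⟩ hxt => by
      have ht : 0 ≤ t := hGnone x t ▸ hxt none
      have hx : ∀ j, g j x ≤ t * b j := fun j => by linarith [hGsome j x t, hxt (some j)]
      simpa using mul_le_of_homogenized_feasible hPadd hPhom hμ hfeas ht hx)
  refine ⟨fun j => ν (some j), fun j => hν _, fun x => ?_⟩
  have hx := hνQ (x, 1)
  simp only [Fintype.sum_option, hGnone, hGsome, mul_one] at hx
  have hneg : ∑ j, ν (some j) * (g j x - b j) = -∑ j, ν (some j) * (b j - g j x) := by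
    simp only [← sum_neg_distrib, ← mul_neg, neg_sub]
  linarith [hν none]

end LinearConstraints

/-- Polyhedral Lagrange principle (scalar case): if the constraints are
polyhedral sublinear functionals and the constrained infimum is `μ`, then some
nonnegative Lagrange multipliers make the unconstrained infimum of the
Lagrangian equal to `μ`. -/
theorem stmt13 {X : Type*} [AddCommGroup X] [Module ℝ X]
    (N : ℕ) (Pc : Fin N → X → ℝ)
    (hpoly : ∀ i, ∃ (s : Finset (X →ₗ[ℝ] ℝ)) (hs : s.Nonempty),
      ∀ x, Pc i x = s.sup' hs fun l => l x)
    (P : X → ℝ)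
    (hPadd : ∀ x y, P (x + y) ≤ P x + P y)
    (hPhom : ∀ (c : ℝ), 0 ≤ c → ∀ x, P (c • x) = c * P x)
    (u : Fin N → ℝ) (hfeas : ∃ x, ∀ i, Pc i x ≤ u i)
    (μ : ℝ) (hμ : IsGLB {r : ℝ | ∃ x, (∀ i, Pc i x ≤ u i) ∧ r = P x} μ) :
    ∃ lam : Fin N → ℝ, (∀ i, 0 ≤ lam i) ∧
      IsGLB {r : ℝ | ∃ x, r = P x + ∑ i, lam i * (Pc i x - u i)} μ := by
  choose s hs hPc using hpoly
  have hle : ∀ i x, ∀ l ∈ s i, l x ≤ Pc i x := fun i x l hl =>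
    hPc i x ▸ le_sup' (fun l : X →ₗ[ℝ] ℝ => l x) hl
  have hfeasible : ∀ x, (∀ i, Pc i x ≤ u i) ↔ ∀ p : Σ i, s i, (p.2 : X →ₗ[ℝ] ℝ) x ≤ u p.1 := by
    simp [hPc, Sigma.forall]
  obtain ⟨ν, hν, hμν⟩ := exists_lagrange_multipliers_of_linear_constraints
    (g := fun p : Σ i, s i => p.2) (b := fun p => u p.1) hPadd hPhom
    (fun x hx => hμ.1 ⟨x, (hfeasible x).mpr hx, rfl⟩) (by simpa [hfeasible] using hfeas)
  refine ⟨fun i => ∑ l, ν ⟨i, l⟩, fun i => sum_nonneg fun l _ => hν _, ?_, ?_⟩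
  · rintro r ⟨x, rfl⟩
    calc μ ≤ P x + ∑ p : Σ i, s i, ν p * ((p.2 : X →ₗ[ℝ] ℝ) x - u p.1) := hμν x
      _ ≤ P x + ∑ p : Σ i, s i, ν p * (Pc p.1 x - u p.1) := by
        gcongr with p; exacts [hν p, hle _ _ _ p.2.2]
      _ = _ := by simp only [Fintype.sum_sigma, sum_mul]
  · intro r hr
    refine hμ.2 ?_
    rintro _ ⟨x, hx, rfl⟩
    refine (hr ⟨x, rfl⟩).trans (add_le_of_nonpos_right (sum_nonpos fun i _ => ?_))
    exact mul_nonpos_of_nonneg_of_nonpos (sum_nonneg fun l _ => hν _) (sub_nonpos.mpr (hx i))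
end
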